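/- arXiv:2206.02994 — 4 statements merged into one kernel-verified Lean document; each statement's English description precedes it below -/
import Mathlib

section
/- Let (𝒳, μ) be a measure space and ψ₁,…,ψ_J : 𝒳 → ℝ be orthonormal in L²(μ), i.e. ∫ ψ_i ψ_j dμ = δ_{ij}. Let ρ be a measure on 𝒳 that is absolutely continuous with respect to μ with density p satisfying p(x) ≥ u > 0 μ-almost everywhere. Let Σ be the J×J matrix with entries Σ_{ij} = ∫ ψ_i ψ_j dρ. Then for every β ∈ ℝ^J one has βᵀΣβ ≥ u‖β‖₂², and consequently for every L ≥ 0 and every nonempty S ⊆ {1,…,J}, the compatibility constant satisfies φ²_Σ(L,S) ≥ u. -/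
/-!
Writing `f = ∑ⱼ βⱼ ψⱼ`, the quadratic form of the Gram matrix is `βᵀΣβ = ∫ f² dρ`. Since
`ρ = p • μ ≥ u • μ`, this is at least `u ∫ f² dμ = u ‖β‖₂²` by orthonormality. The bound on
the compatibility constant then follows from Cauchy–Schwarz, `‖β_S‖₁² ≤ |S| ‖β_S‖₂² ≤ |S| ‖β‖₂²`.
-/

open MeasureTheory

noncomputable def compat {J : ℕ} (M : Matrix (Fin J) (Fin J) ℝ) (L : ℝ)
    (S : Finset (Fin J)) : ℝ :=
  ⨅ β : {β : Fin J → ℝ //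
      (∑ j ∈ Sᶜ, |β j|) ≤ L * ∑ j ∈ S, |β j| ∧ ∃ j ∈ S, β j ≠ 0},
    (S.card : ℝ) * (∑ i, ∑ j, β.1 i * M i j * β.1 j) / (∑ j ∈ S, |β.1 j|) ^ 2

section GramMatrix

variable {X ι : Type*} [Fintype ι]

theorem sq_sum_mul_eq_sum_sum (ψ : ι → X → ℝ) (β : ι → ℝ) :
    (fun x => (∑ j, β j * ψ j x) ^ 2) = fun x => ∑ i, ∑ j, β i * β j * (ψ i x * ψ j x) := by
  ext x
  rw [sq, Finset.sum_mul_sum]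
  exact Finset.sum_congr rfl fun i _ => Finset.sum_congr rfl fun j _ => by ring

variable [MeasurableSpace X]

theorem integrable_sq_sum_mul {ν : Measure X} {ψ : ι → X → ℝ} (β : ι → ℝ)
    (hInt : ∀ i j, Integrable (fun x => ψ i x * ψ j x) ν) :
    Integrable (fun x => (∑ j, β j * ψ j x) ^ 2) ν := by
  rw [sq_sum_mul_eq_sum_sum]
  exact integrable_finsetSum _ fun i _ =>
    integrable_finsetSum _ fun j _ => (hInt i j).const_mul _

theorem integral_sq_sum_mul (ν : Measure X) (ψ : ι → X → ℝ) (β : ι → ℝ)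
    (hInt : ∀ i j, Integrable (fun x => ψ i x * ψ j x) ν) :
    ∫ x, (∑ j, β j * ψ j x) ^ 2 ∂ν = ∑ i, ∑ j, β i * (∫ x, ψ i x * ψ j x ∂ν) * β j := by
  rw [sq_sum_mul_eq_sum_sum, integral_finsetSum _ fun i _ =>
    integrable_finsetSum _ fun j _ => (hInt i j).const_mul _]
  refine Finset.sum_congr rfl fun i _ => ?_
  rw [integral_finsetSum _ fun j _ => (hInt i j).const_mul _]
  exact Finset.sum_congr rfl fun j _ => by rw [integral_const_mul]; ring

theorem smul_le_withDensity {μ : Measure X} {p : X → ENNReal} {c : ENNReal}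
    (hpc : ∀ᵐ x ∂μ, c ≤ p x) : c • μ ≤ μ.withDensity p := by
  rw [← withDensity_const]
  exact withDensity_mono hpc

theorem MeasureTheory.Integrable.of_withDensity_of_le {μ : Measure X} {p : X → ENNReal} {u : ℝ}
    (hu : 0 < u) (hpu : ∀ᵐ x ∂μ, ENNReal.ofReal u ≤ p x) {E : Type*} [NormedAddCommGroup E]
    {f : X → E}
    (hf : Integrable f (μ.withDensity p)) : Integrable f μ :=
  (integrable_smul_measure (ENNReal.ofReal_pos.mpr hu).ne' ENNReal.ofReal_ne_top).mp
    (hf.mono_measure (smul_le_withDensity hpu))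

variable [DecidableEq ι]

theorem mul_sum_sq_le_sum_sum_integral_withDensity (μ : Measure X) (ψ : ι → X → ℝ)
    (horth : ∀ i j, ∫ x, ψ i x * ψ j x ∂μ = if i = j then 1 else 0)
    {p : X → ENNReal} {u : ℝ} (hu : 0 < u) (hpu : ∀ᵐ x ∂μ, ENNReal.ofReal u ≤ p x)
    (hInt : ∀ i j, Integrable (fun x => ψ i x * ψ j x) (μ.withDensity p)) (β : ι → ℝ) :
    u * ∑ j, β j ^ 2
      ≤ ∑ i, ∑ j, β i * (∫ x, ψ i x * ψ j x ∂μ.withDensity p) * β j := by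
  have hIntμ i j := (hInt i j).of_withDensity_of_le hu hpu
  have hnormsq : ∫ x, (∑ j, β j * ψ j x) ^ 2 ∂μ = ∑ j, β j ^ 2 := by
    rw [integral_sq_sum_mul μ ψ β hIntμ]
    simp [horth, sq]
  calc u * ∑ j, β j ^ 2
      = ∫ x, (∑ j, β j * ψ j x) ^ 2 ∂(ENNReal.ofReal u • μ) := by
        rw [integral_smul_measure, ENNReal.toReal_ofReal hu.le, hnormsq, smul_eq_mul]
    _ ≤ ∫ x, (∑ j, β j * ψ j x) ^ 2 ∂μ.withDensity p :=
        integral_mono_measure (smul_le_withDensity hpu) (.of_forall fun _ => sq_nonneg _)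
          (integrable_sq_sum_mul β hInt)
    _ = _ := integral_sq_sum_mul _ ψ β hInt

end GramMatrix

section CompatibilityConstant

theorem sq_sum_abs_le_card_mul_sum_sq {ι : Type*} [Fintype ι] (S : Finset ι) (β : ι → ℝ) :
    (∑ j ∈ S, |β j|) ^ 2 ≤ S.card * ∑ j, β j ^ 2 :=
  calc (∑ j ∈ S, |β j|) ^ 2
      ≤ S.card * ∑ j ∈ S, |β j| ^ 2 := sq_sum_le_card_mul_sum_sq (s := S) (f := fun j => |β j|)
    _ = S.card * ∑ j ∈ S, β j ^ 2 := by simp only [sq_abs]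
    _ ≤ S.card * ∑ j, β j ^ 2 := by
        gcongr
        exact S.subset_univ

variable {J : ℕ} {L : ℝ} {S : Finset (Fin J)}

theorem nonempty_compat_cone (hL : 0 ≤ L) (hS : S.Nonempty) :
    Nonempty {β : Fin J → ℝ // (∑ j ∈ Sᶜ, |β j|) ≤ L * ∑ j ∈ S, |β j| ∧ ∃ j ∈ S, β j ≠ 0} := by
  obtain ⟨j₀, hj₀⟩ := hS
  refine ⟨⟨fun j => if j ∈ S then 1 else 0, ?_, j₀, hj₀, by simp [hj₀]⟩⟩
  have hcompl : ∑ j ∈ Sᶜ, |if j ∈ S then (1 : ℝ) else 0| = 0 :=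
    Finset.sum_eq_zero fun j hj => by simp [Finset.mem_compl.mp hj]
  rw [hcompl]
  positivity

theorem le_compat_of_mul_sum_sq_le {M : Matrix (Fin J) (Fin J) ℝ} {u : ℝ} (hu : 0 ≤ u)
    (hL : 0 ≤ L) (hS : S.Nonempty)
    (hM : ∀ β : Fin J → ℝ, u * ∑ j, β j ^ 2 ≤ ∑ i, ∑ j, β i * M i j * β j) :
    u ≤ compat M L S := by
  have := nonempty_compat_cone hL hS
  refine le_ciInf fun ⟨β, _, j₁, hj₁, hβj₁⟩ => ?_
  have hℓ₁ : 0 < ∑ j ∈ S, |β j| :=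
    Finset.sum_pos' (fun j _ => abs_nonneg _) ⟨j₁, hj₁, abs_pos.mpr hβj₁⟩
  rw [le_div_iff₀ (by positivity)]
  calc u * (∑ j ∈ S, |β j|) ^ 2
      ≤ u * (S.card * ∑ j, β j ^ 2) := by gcongr; exact sq_sum_abs_le_card_mul_sum_sq S β
    _ = S.card * (u * ∑ j, β j ^ 2) := by ring
    _ ≤ S.card * ∑ i, ∑ j, β i * M i j * β j := by gcongr; exact hM β

end CompatibilityConstant

theorem stmt3_general (𝒳 : Type*) [MeasurableSpace 𝒳] (μ : Measure 𝒳) (J : ℕ)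
    (ψ : Fin J → 𝒳 → ℝ)
    (horth : ∀ i j : Fin J, ∫ x, ψ i x * ψ j x ∂μ = if i = j then 1 else 0)
    (p : 𝒳 → ENNReal) (u : ℝ) (hu : 0 < u)
    (hpu : ∀ᵐ x ∂μ, ENNReal.ofReal u ≤ p x)
    (ρ : Measure 𝒳) (hρ : ρ = μ.withDensity p)
    (hInt : ∀ i j : Fin J, Integrable (fun x => ψ i x * ψ j x) ρ)
    (M : Matrix (Fin J) (Fin J) ℝ) (hM : ∀ i j, M i j = ∫ x, ψ i x * ψ j x ∂ρ) :
    (∀ β : Fin J → ℝ, u * ∑ j, β j ^ 2 ≤ ∑ i, ∑ j, β i * M i j * β j) ∧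
    (∀ L : ℝ, 0 ≤ L → ∀ S : Finset (Fin J), S.Nonempty → u ≤ compat M L S) := by
  subst hρ
  have hquad (β : Fin J → ℝ) : u * ∑ j, β j ^ 2 ≤ ∑ i, ∑ j, β i * M i j * β j := by
    simpa only [hM] using mul_sum_sq_le_sum_sum_integral_withDensity μ ψ horth hu hpu hInt β
  exact ⟨hquad, fun L hL S hS => le_compat_of_mul_sum_sq_le hu.le hL hS hquad⟩

/-- If `(ψ_j)` is orthonormal in `L²(μ)` and `ρ = μ.withDensity p` with `p ≥ u > 0`
`μ`-a.e., then the Gram matrix `Σ_{ij} = ∫ ψ_i ψ_j dρ` satisfies `βᵀΣβ ≥ u‖β‖₂²`, so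
its compatibility constant is at least `u` for every `L ≥ 0` and nonempty `S`. -/
theorem stmt3 (𝒳 : Type*) [MeasurableSpace 𝒳] (μ : Measure 𝒳) (J : ℕ) (hJ : 0 < J)
    (ψ : Fin J → 𝒳 → ℝ) (hψ : ∀ j, Measurable (ψ j))
    (horth : ∀ i j : Fin J, ∫ x, ψ i x * ψ j x ∂μ = if i = j then 1 else 0)
    (p : 𝒳 → ENNReal) (hp : Measurable p) (u : ℝ) (hu : 0 < u)
    (hpu : ∀ᵐ x ∂μ, ENNReal.ofReal u ≤ p x)
    (ρ : Measure 𝒳) (hρ : ρ = μ.withDensity p)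
    (hInt : ∀ i j : Fin J, Integrable (fun x => ψ i x * ψ j x) ρ)
    (M : Matrix (Fin J) (Fin J) ℝ) (hM : ∀ i j, M i j = ∫ x, ψ i x * ψ j x ∂ρ) :
    (∀ β : Fin J → ℝ, u * ∑ j, β j ^ 2 ≤ ∑ i, ∑ j, β i * M i j * β j) ∧
    (∀ L : ℝ, 0 ≤ L → ∀ S : Finset (Fin J), S.Nonempty → u ≤ compat M L S) :=
  stmt3_general 𝒳 μ J ψ horth p u hu hpu ρ hρ hInt M hM
end

section
/- Let ρ be a probability measure on a measurable space 𝒳 and let ψ₁,…,ψ_J : 𝒳 → ℝ be measurable with |ψ_j(x)| ≤ B for all j and x. Let X₁,…,X_n be i.i.d. with law ρ, let Σ be the population matrix Σ_{ij} = ∫ ψ_i ψ_j dρ, and let Σ̂ be the empirical matrix Σ̂_{ij} = n⁻¹ Σ_{k=1}^n ψ_i(X_k)ψ_j(X_k). Fix L ≥ 0 and a nonempty S ⊆ {1,…,J}, and suppose φ²_Σ(L,S) ≥ u for some u > 0. Set a = u·(L+1)⁻²·|S|⁻¹/2. Then with probability at least 1 − J²·exp(−n a² / (2B⁴)), one has φ²_{Σ̂}(L,S)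 ≥ u/2. -/
open MeasureTheory ProbabilityTheory

open Real in
lemma core_ineq (p : ℝ) (hp0 : 0 ≤ p) (hp1 : p ≤ 1) (x : ℝ) :
    (1 - p) * Real.exp (-x) + p * Real.exp x ≤ Real.exp ((2*p - 1) * x + x^2 / 2) := by
  have hD_pos' : ∀ y, 0 < (1 - p) * Real.exp (-y) + p * Real.exp y := by
    intro y
    have hm : 0 < min (Real.exp (-y)) (Real.exp y) := lt_min (exp_pos _) (exp_pos _)
    calc (0:ℝ) < min (Real.exp (-y)) (Real.exp y) := hm
      _ = (1 - p) * min (Real.exp (-y)) (Real.exp y) + p * min (Real.exp (-y)) (Real.exp y) := by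
          ring
      _ ≤ (1 - p) * Real.exp (-y) + p * Real.exp y := by
          gcongr
          · exact min_le_left _ _
          · exact min_le_right _ _
  set D : ℝ → ℝ := fun y => (1 - p) * Real.exp (-y) + p * Real.exp y with hD_def
  set N : ℝ → ℝ := fun y => p * Real.exp y - (1 - p) * Real.exp (-y) with hN_def
  have hD_pos : ∀ y, 0 < D y := hD_pos'
  have hD' : ∀ y, HasDerivAt D (N y) y := by
    intro y
    have h1 : HasDerivAt (fun t : ℝ => Real.exp (-t)) (Real.exp (-y) * (-1)) y :=
      (hasDerivAt_neg y).exp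
    have h2 : HasDerivAt Real.exp (Real.exp y) y := Real.hasDerivAt_exp y
    have := ((h1.const_mul (1 - p)).fun_add (h2.const_mul p))
    convert this using 1
    · rfl
    · rfl
    simp [hN_def]; ring
  have hN' : ∀ y, HasDerivAt N (D y) y := by
    intro y
    have h1 : HasDerivAt (fun t : ℝ => Real.exp (-t)) (Real.exp (-y) * (-1)) y :=
      (hasDerivAt_neg y).exp
    have h2 : HasDerivAt Real.exp (Real.exp y) y := Real.hasDerivAt_exp y
    have := ((h2.const_mul p).fun_sub (h1.const_mul (1 - p)))
    convert this using 1
    · rfl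
    · rfl
    simp [hD_def]; ring
  set g : ℝ → ℝ := fun y => (2*p - 1) * y + y^2/2 - Real.log (D y) with hg_def
  set g' : ℝ → ℝ := fun y => (2*p - 1) + y - N y / D y with hg'_def
  have hg'_at : ∀ y, HasDerivAt g (g' y) y := by
    intro y
    have hlog : HasDerivAt (fun t => Real.log (D t)) (N y / D y) y :=
      (hD' y).log (hD_pos y).ne'
    have hlin : HasDerivAt (fun t : ℝ => (2*p - 1) * t + t^2/2) ((2*p-1) + y) y := by
      have h1 : HasDerivAt (fun t : ℝ => (2*p - 1) * t) (2*p - 1) y := by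
        simpa using (hasDerivAt_id y).const_mul (2*p - 1)
      have h2 : HasDerivAt (fun t : ℝ => t^2/2) (y) y := by
        have := (hasDerivAt_pow 2 y).div_const 2
        simpa using this
      simpa using h1.fun_add h2
    simpa [hg'_def] using hlin.fun_sub hlog
  have hg''_at : ∀ y, HasDerivAt g' (1 - (D y * D y - N y * N y) / (D y)^2) y := by
    intro y
    have hdiv : HasDerivAt (fun t => N t / D t) ((D y * D y - N y * N y) / (D y)^2) y :=
      (hN' y).div (hD' y) (hD_pos y).ne'
    have hlin : HasDerivAt (fun t : ℝ => (2*p - 1) + t) 1 y := by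
      simpa using (hasDerivAt_const y (2*p-1)).fun_add (hasDerivAt_id' y)
    simpa [hg'_def] using hlin.fun_sub hdiv
  have hg'_mono : Monotone g' := by
    apply monotone_of_deriv_nonneg (fun y => (hg''_at y).differentiableAt)
    intro y
    rw [(hg''_at y).deriv]
    obtain ⟨d, hd⟩ : ∃ d, D y = d := ⟨_, rfl⟩
    obtain ⟨m, hm⟩ : ∃ m, N y = m := ⟨_, rfl⟩
    have hd0 : d ≠ 0 := by rw [← hd]; exact (hD_pos y).ne'
    rw [hd, hm]
    have h : 1 - (d * d - m * m) / d^2 = (m/d)^2 := by field_simp; ring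
    rw [h]
    positivity
  have hg'0 : g' 0 = 0 := by
    simp only [hg'_def, hN_def, hD_def, Real.exp_zero, neg_zero, mul_one]
    have : (1 - p) * 1 + p * 1 = 1 := by ring
    norm_num
    ring
  have hg_diff : Differentiable ℝ g := fun y => (hg'_at y).differentiableAt
  have hg0 : g 0 = 0 := by
    simp [hg_def, hD_def]
  have hg_nonneg : 0 ≤ g x := by
    rcases le_total 0 x with hx | hx
    · have hmono : MonotoneOn g (Set.Ici 0) := by
        apply monotoneOn_of_deriv_nonneg (convex_Ici 0) hg_diff.continuous.continuousOn
          hg_diff.differentiableOn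
        intro y hy
        rw [(hg'_at y).deriv, ← hg'0]
        exact hg'_mono (le_of_lt (by simpa using hy))
      have := hmono Set.self_mem_Ici hx hx
      rwa [hg0] at this
    · have hanti : AntitoneOn g (Set.Iic 0) := by
        apply antitoneOn_of_deriv_nonpos (convex_Iic 0) hg_diff.continuous.continuousOn
          hg_diff.differentiableOn
        intro y hy
        rw [(hg'_at y).deriv, ← hg'0]
        exact hg'_mono (le_of_lt (by simpa using hy))
      have := hanti hx Set.self_mem_Iic hx
      rwa [hg0] at this
  have hlog : Real.log (D x) ≤ (2*p - 1) * x + x^2/2 := by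
    have : 0 ≤ (2*p - 1) * x + x^2/2 - Real.log (D x) := hg_nonneg
    linarith
  show D x ≤ Real.exp ((2*p - 1) * x + x^2/2)
  rw [← Real.exp_log (hD_pos x)]
  exact Real.exp_le_exp.mpr hlog

open MeasureTheory ProbabilityTheory

lemma integrable_of_bdd {Ω : Type*} [MeasurableSpace Ω] {P : Measure Ω} [IsProbabilityMeasure P]
    {f : Ω → ℝ} (hf : Measurable f) {C : ℝ} (h : ∀ ω, |f ω| ≤ C) : Integrable f P :=
  (integrable_const C).mono' hf.aestronglyMeasurable
    (ae_of_all _ (by simpa [Real.norm_eq_abs] using h))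

lemma mgf_le_of_bounded {Ω : Type*} [MeasurableSpace Ω] (P : Measure Ω) [IsProbabilityMeasure P]
    (Y : Ω → ℝ) (hY : Measurable Y) (c : ℝ) (hc : 0 < c) (hYb : ∀ ω, |Y ω| ≤ c) (s : ℝ) :
    mgf Y P s ≤ Real.exp (s * (∫ ω, Y ω ∂P) + s^2 * c^2 / 2) := by
  set m := ∫ ω, Y ω ∂P with hm
  have hintY : Integrable Y P := integrable_of_bdd hY hYb
  have hmc : |m| ≤ c := by
    have := norm_integral_le_of_norm_le_const (μ := P) (f := Y) (C := c)
      (ae_of_all _ (fun ω => by simpa [Real.norm_eq_abs] using hYb ω))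
    simpa [Real.norm_eq_abs] using this
  set A : ℝ := (Real.exp (-(s*c)) + Real.exp (s*c)) / 2 with hA
  set r : ℝ := (Real.exp (s*c) - Real.exp (-(s*c))) / (2*c) with hr
  have hpt : ∀ ω, Real.exp (s * Y ω) ≤ A + r * Y ω := by
    intro ω
    have hy := abs_le.mp (hYb ω)
    have ha : 0 ≤ (c - Y ω)/(2*c) := div_nonneg (by linarith [hy.2]) (by linarith)
    have hb : 0 ≤ (c + Y ω)/(2*c) := div_nonneg (by linarith [hy.1]) (by linarith)
    have hab : (c - Y ω)/(2*c) + (c + Y ω)/(2*c) = 1 := by field_simp; ring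
    have hconv := convexOn_exp.2 (Set.mem_univ (-(s*c))) (Set.mem_univ (s*c)) ha hb hab
    have h2c : (2*c) ≠ 0 := by positivity
    have harg : ((c - Y ω)/(2*c)) • (-(s*c)) + ((c + Y ω)/(2*c)) • (s*c) = s * Y ω := by
      simp only [smul_eq_mul]
      rw [div_mul_eq_mul_div, div_mul_eq_mul_div, ← add_div, eq_comm, eq_div_iff h2c]
      ring
    rw [harg] at hconv
    simp only [smul_eq_mul] at hconv
    calc Real.exp (s * Y ω)
        ≤ (c - Y ω)/(2*c) * Real.exp (-(s*c)) + (c + Y ω)/(2*c) * Real.exp (s*c) := hconv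
      _ = A + r * Y ω := by
          rw [hA, hr]
          field_simp
          ring
  have hintexp : Integrable (fun ω => Real.exp (s * Y ω)) P := by
    apply integrable_of_bdd ((hY.const_mul s).exp) (C := Real.exp (|s| * c))
    intro ω
    rw [abs_of_nonneg (Real.exp_pos _).le]
    apply Real.exp_le_exp.mpr
    calc s * Y ω ≤ |s * Y ω| := le_abs_self _
      _ = |s| * |Y ω| := abs_mul _ _
      _ ≤ |s| * c := mul_le_mul_of_nonneg_left (hYb ω) (abs_nonneg s)
  have hint2 : Integrable (fun ω => A + r * Y ω) P := (integrable_const A).add (hintY.const_mul r)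
  have h1 : mgf Y P s ≤ ∫ ω, (A + r * Y ω) ∂P := by
    refine le_trans (le_of_eq rfl) (integral_mono hintexp hint2 hpt)
  have h2 : (∫ ω, (A + r * Y ω) ∂P) = A + r * m := by
    rw [integral_add (integrable_const A) (hintY.const_mul r), integral_const,
      integral_const_mul]
    simp [hm]
  set p := (c + m)/(2*c) with hp
  have hmc' := abs_le.mp hmc
  have hp0 : 0 ≤ p := div_nonneg (by linarith [hmc'.1]) (by linarith)
  have hp1 : p ≤ 1 := by
    rw [hp, div_le_one (by linarith)]
    linarith [hmc'.2]
  have hkey := core_ineq p hp0 hp1 (s*c)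
  have hLeq : (1-p) * Real.exp (-(s*c)) + p * Real.exp (s*c) = A + r * m := by
    rw [hA, hr, hp]; field_simp; ring
  have hReq : (2*p - 1) * (s*c) + (s*c)^2/2 = s * m + s^2*c^2/2 := by
    rw [hp]; field_simp; ring
  rw [hLeq, hReq] at hkey
  rw [h2] at h1
  exact h1.trans hkey

lemma hoef {Ω : Type*} [MeasurableSpace Ω] (P : Measure Ω) [IsProbabilityMeasure P]
    {n : ℕ} (Y : Fin n → Ω → ℝ) (hmeas : ∀ k, Measurable (Y k))
    (hindep : iIndepFun Y P)
    (c : ℝ) (hc : 0 < c) (hYb : ∀ k ω, |Y k ω| ≤ c)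
    (m : ℝ) (hm : ∀ k, (∫ ω, Y k ω ∂P) = m) (ε : ℝ) (hε : 0 ≤ ε) :
    (P {ω | (n : ℝ) * (m + ε) ≤ ∑ k, Y k ω}).toReal ≤ Real.exp (-((n:ℝ) * ε^2) / (2 * c^2)) := by
  set t := ε / c^2 with ht_def
  have ht : 0 ≤ t := div_nonneg hε (by positivity)
  have hsum_meas : Measurable (fun ω => ∑ k, Y k ω) := by
    exact Finset.measurable_sum _ (fun k _ => hmeas k)
  have hint : Integrable (fun ω => Real.exp (t * (∑ k, Y k ω))) P := by
    apply integrable_of_bdd ((hsum_meas.const_mul t).exp) (C := Real.exp (t * (n * c)))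
    intro ω
    rw [abs_of_nonneg (Real.exp_pos _).le]
    apply Real.exp_le_exp.mpr
    apply mul_le_mul_of_nonneg_left _ ht
    calc (∑ k, Y k ω) ≤ ∑ k, |Y k ω| := Finset.sum_le_sum (fun k _ => le_abs_self _)
      _ ≤ ∑ _k : Fin n, c := Finset.sum_le_sum (fun k _ => hYb k ω)
      _ = n * c := by simp [mul_comm]
  have hchern := measure_ge_le_exp_mul_mgf (μ := P) (X := fun ω => ∑ k, Y k ω)
    ((n : ℝ) * (m + ε)) ht hint
  have hmgf_sum : mgf (fun ω => ∑ k, Y k ω) P t = ∏ k, mgf (Y k) P t := by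
    have h := hindep.mgf_sum (t := t) hmeas Finset.univ
    have he : (∑ i : Fin n, Y i) = fun ω => ∑ k, Y k ω := by funext ω; simp
    rwa [he] at h
  have hmgf_le : mgf (fun ω => ∑ k, Y k ω) P t ≤ Real.exp ((n:ℝ) * (t * m + t^2 * c^2 / 2)) := by
    rw [hmgf_sum]
    calc ∏ k, mgf (Y k) P t ≤ ∏ _k : Fin n, Real.exp (t * m + t^2 * c^2 / 2) := by
          apply Finset.prod_le_prod (fun k _ => mgf_nonneg)
          intro k _
          have := mgf_le_of_bounded P (Y k) (hmeas k) c hc (hYb k) t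
          rwa [hm k] at this
      _ = Real.exp ((n:ℝ) * (t * m + t^2 * c^2 / 2)) := by
          rw [Finset.prod_const, ← Real.exp_nat_mul]
          simp
  calc (P {ω | (n : ℝ) * (m + ε) ≤ ∑ k, Y k ω}).toReal
      ≤ Real.exp (-t * ((n:ℝ) * (m + ε))) * mgf (fun ω => ∑ k, Y k ω) P t := hchern
    _ ≤ Real.exp (-t * ((n:ℝ) * (m + ε))) * Real.exp ((n:ℝ) * (t * m + t^2 * c^2 / 2)) := by
        gcongr
    _ = Real.exp (-((n:ℝ) * ε^2) / (2 * c^2)) := by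
        rw [← Real.exp_add]
        congr 1
        rw [ht_def]
        field_simp
        ring

lemma compat_nonempty {J : ℕ} (L : ℝ) (hL : 0 ≤ L) (S : Finset (Fin J)) (hS : S.Nonempty) :
    Nonempty {β : Fin J → ℝ //
      (∑ j ∈ Sᶜ, |β j|) ≤ L * ∑ j ∈ S, |β j| ∧ ∃ j ∈ S, β j ≠ 0} := by
  obtain ⟨j₀, hj₀⟩ := hS
  refine ⟨⟨Pi.single j₀ 1, ?_, j₀, hj₀, by simp⟩⟩
  have h0 : (∑ j ∈ Sᶜ, |Pi.single j₀ (1:ℝ) j|) = 0 := by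
    apply Finset.sum_eq_zero
    intro j hj
    have hne : j ≠ j₀ := by
      intro h
      exact (Finset.mem_compl.mp hj) (h ▸ hj₀)
    simp [Pi.single_eq_of_ne hne]
  rw [h0]
  exact mul_nonneg hL (Finset.sum_nonneg (fun j _ => abs_nonneg _))

set_option maxHeartbeats 1000000 in
lemma det_lemma {J : ℕ} (M N : Matrix (Fin J) (Fin J) ℝ) (L u a : ℝ) (hL : 0 ≤ L) (hu : 0 < u)
    (S : Finset (Fin J)) (hS : S.Nonempty)
    (hpsd : ∀ β : Fin J → ℝ, 0 ≤ ∑ i, ∑ j, β i * M i j * β j)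
    (hcompat : u ≤ compat M L S)
    (ha : a = u * ((L + 1)⁻¹) ^ 2 * ((S.card : ℝ))⁻¹ / 2)
    (h1 : ∀ i j, -a ≤ N i j - M i j)
    (h2 : ∀ i j, i ≠ j → N i j - M i j ≤ a) :
    u / 2 ≤ compat N L S := by
  have hne := compat_nonempty L hL S hS
  have ha_pos : 0 < a := by
    rw [ha]
    have hc : (0:ℝ) < S.card := by
      exact_mod_cast Finset.card_pos.mpr hS
    positivity
  have hL1 : (L + 1) ≠ 0 := by positivity
  have hcard0 : ((S.card : ℝ)) ≠ 0 := by
    have : (0:ℝ) < S.card := by exact_mod_cast Finset.card_pos.mpr hS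
    exact this.ne'
  have hAcard : a * (1 + L)^2 * (S.card : ℝ) = u / 2 := by
    rw [ha]
    field_simp
    ring
  apply le_ciInf
  rintro ⟨β, hβ1, j₁, hj₁S, hj₁⟩
  dsimp only
  set T := ∑ j ∈ S, |β j| with hT_def
  have hT : 0 < T := by
    have h := Finset.single_le_sum (f := fun j => |β j|) (fun i _ => abs_nonneg _) hj₁S
    exact lt_of_lt_of_le (abs_pos.mpr hj₁) h
  set QM := ∑ i, ∑ j, β i * M i j * β j with hQM_def
  set QN := ∑ i, ∑ j, β i * N i j * β j with hQN_def
  have hu' : u ≤ (S.card : ℝ) * QM / T^2 := by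
    refine hcompat.trans ?_
    have hbdd : BddBelow (Set.range (fun β : {β : Fin J → ℝ //
        (∑ j ∈ Sᶜ, |β j|) ≤ L * ∑ j ∈ S, |β j| ∧ ∃ j ∈ S, β j ≠ 0} =>
        (S.card : ℝ) * (∑ i, ∑ j, β.1 i * M i j * β.1 j) / (∑ j ∈ S, |β.1 j|) ^ 2)) := by
      refine ⟨0, fun y hy => ?_⟩
      obtain ⟨γ, rfl⟩ := hy
      exact div_nonneg (mul_nonneg (Nat.cast_nonneg _) (hpsd γ.1)) (sq_nonneg _)
    exact ciInf_le hbdd ⟨β, hβ1, j₁, hj₁S, hj₁⟩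
  -- bound QN from below
  have hkey : ∀ i j, -(a * (|β i| * |β j|)) ≤ β i * (N i j - M i j) * β j := by
    intro i j
    rcases eq_or_ne i j with rfl | hij
    · have := h1 i i
      nlinarith [sq_nonneg (β i), sq_abs (β i)]
    · have habs : |N i j - M i j| ≤ a := abs_le.mpr ⟨h1 i j, h2 i j hij⟩
      have h3 : |β i * (N i j - M i j) * β j| ≤ |β i| * a * |β j| := by
        rw [abs_mul, abs_mul]
        gcongr
      have h4 := neg_abs_le (β i * (N i j - M i j) * β j)
      nlinarith [abs_nonneg (β i), abs_nonneg (β j)]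
  have hsplit : QN = QM + ∑ i, ∑ j, β i * (N i j - M i j) * β j := by
    rw [hQN_def, hQM_def, ← Finset.sum_add_distrib]
    apply Finset.sum_congr rfl
    intro i _
    rw [← Finset.sum_add_distrib]
    apply Finset.sum_congr rfl
    intro j _
    ring
  have hsum1 : (∑ j, |β j|) ≤ (1 + L) * T := by
    have := Finset.sum_add_sum_compl S (fun j => |β j|)
    have h5 : (∑ j ∈ Sᶜ, |β j|) ≤ L * T := hβ1
    nlinarith [this]
  have hsum_nonneg : 0 ≤ ∑ j, |β j| := Finset.sum_nonneg (fun j _ => abs_nonneg _)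
  have hΔ : -(a * ((1 + L) * T)^2) ≤ ∑ i, ∑ j, β i * (N i j - M i j) * β j := by
    have step1 : -(a * (∑ j, |β j|)^2) ≤ ∑ i, ∑ j, β i * (N i j - M i j) * β j := by
      have heq0 : (∑ i, ∑ j, |β i| * |β j|) = (∑ j, |β j|)^2 := by
        rw [pow_two, Finset.sum_mul_sum]
      have heq : (∑ i, ∑ j, -(a * (|β i| * |β j|))) = -(a * (∑ j, |β j|)^2) := by
        rw [← heq0, Finset.mul_sum, ← Finset.sum_neg_distrib]
        apply Finset.sum_congr rfl
        intro i _
        rw [Finset.mul_sum, ← Finset.sum_neg_distrib]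
      rw [← heq]
      exact Finset.sum_le_sum (fun i _ => Finset.sum_le_sum (fun j _ => hkey i j))
    refine le_trans ?_ step1
    have h1L : (0:ℝ) ≤ (1 + L) * T := mul_nonneg (by linarith) hT.le
    have hsq : (∑ j, |β j|)^2 ≤ ((1 + L) * T)^2 := by
      apply sq_le_sq' _ hsum1
      linarith
    nlinarith [ha_pos.le]
  have hQN_lb : QM - a * ((1 + L) * T)^2 ≤ QN := by
    rw [hsplit]; linarith
  -- final arithmetic
  rw [le_div_iff₀ (by positivity : (0:ℝ) < T^2)] at hu'
  rw [le_div_iff₀ (by positivity : (0:ℝ) < T^2)]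
  have e1 : (S.card:ℝ) * (QM - a * ((1 + L) * T)^2) ≤ (S.card:ℝ) * QN :=
    mul_le_mul_of_nonneg_left hQN_lb (Nat.cast_nonneg _)
  have e2 : (S.card:ℝ) * (a * ((1 + L) * T)^2) = u / 2 * T^2 := by
    linear_combination (T^2) * hAcard
  nlinarith [e1, e2, hu']


set_option maxHeartbeats 1000000 in
/-- If the population compatibility constant satisfies `φ²_Σ(L,S) ≥ u` and the dictionary
is bounded by `B`, then with probability at least `1 − J²·exp(−n·a²/(2B⁴))`, where
`a = u·(L+1)⁻²·|S|⁻¹/2`, the empirical compatibility constant satisfies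
`φ²_{Σ̂}(L,S) ≥ u/2`. -/
theorem stmt4 (𝒳 : Type*) [MeasurableSpace 𝒳] (Ω : Type*) [MeasurableSpace Ω]
    (P : Measure Ω) [IsProbabilityMeasure P]
    (ρ : Measure 𝒳) [IsProbabilityMeasure ρ]
    (n J : ℕ) (hn : 0 < n) (hJ : 0 < J)
    (ψ : Fin J → 𝒳 → ℝ) (hψ : ∀ j, Measurable (ψ j))
    (B : ℝ) (hB : 0 < B) (hψB : ∀ (j : Fin J) (x : 𝒳), |ψ j x| ≤ B)
    (X : Fin n → Ω → 𝒳) (hX : ∀ i, Measurable (X i))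
    (hindep : iIndepFun X P)
    (hident : ∀ i, Measure.map (X i) P = ρ)
    (M : Matrix (Fin J) (Fin J) ℝ) (hM : ∀ i j, M i j = ∫ x, ψ i x * ψ j x ∂ρ)
    (L u : ℝ) (hL : 0 ≤ L) (hu : 0 < u)
    (S : Finset (Fin J)) (hS : S.Nonempty)
    (hcompat : u ≤ compat M L S) :
    ENNReal.ofReal (1 - (J : ℝ) ^ 2 *
        Real.exp (-(n * (u * ((L + 1)⁻¹) ^ 2 * ((S.card : ℝ))⁻¹ / 2) ^ 2) / (2 * B ^ 4)))
      ≤ P {ω | u / 2 ≤ compat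
          (Matrix.of fun j k => (n : ℝ)⁻¹ * ∑ i, ψ j (X i ω) * ψ k (X i ω)) L S} := by
  
  classical
  set a : ℝ := u * ((L + 1)⁻¹) ^ 2 * ((S.card : ℝ))⁻¹ / 2 with ha_def
  set E₀ : ℝ := Real.exp (-((n:ℝ) * a ^ 2) / (2 * B ^ 4)) with hE₀_def
  have hnR : (0:ℝ) < n := by exact_mod_cast hn
  have hcardpos : (0:ℝ) < S.card := by exact_mod_cast Finset.card_pos.mpr hS
  have ha_pos : 0 < a := by rw [ha_def]; positivity
  have hfb : ∀ (i j : Fin J) (x : 𝒳), |ψ i x * ψ j x| ≤ B^2 := by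
    intro i j x
    rw [abs_mul, pow_two]
    exact mul_le_mul (hψB i x) (hψB j x) (abs_nonneg _) hB.le
  have hfmeas : ∀ i j : Fin J, Measurable (fun x => ψ i x * ψ j x) :=
    fun i j => (hψ i).mul (hψ j)
  -- M is positive semidefinite
  have hpsd : ∀ β : Fin J → ℝ, 0 ≤ ∑ i, ∑ j, β i * M i j * β j := by
    intro β
    have hint : ∀ i j : Fin J, Integrable (fun x => β i * (ψ i x * ψ j x) * β j) ρ := by
      intro i j
      apply integrable_of_bdd (((hfmeas i j).const_mul (β i)).mul_const (β j))
        (C := |β i| * B^2 * |β j|)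
      intro x
      rw [abs_mul, abs_mul]
      exact mul_le_mul_of_nonneg_right
        (mul_le_mul_of_nonneg_left (hfb i j x) (abs_nonneg _)) (abs_nonneg _)
    have e1 : ∀ i j, β i * M i j * β j = ∫ x, β i * (ψ i x * ψ j x) * β j ∂ρ := by
      intro i j
      rw [hM i j, integral_mul_const, integral_const_mul]
    have e2 : (∑ i, ∑ j, β i * M i j * β j)
        = ∫ x, ∑ i, ∑ j, β i * (ψ i x * ψ j x) * β j ∂ρ := by
      rw [integral_finset_sum _ (fun i _ => integrable_finset_sum _ (fun j _ => hint i j))]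
      apply Finset.sum_congr rfl
      intro i _
      rw [integral_finset_sum _ (fun j _ => hint i j)]
      exact Finset.sum_congr rfl (fun j _ => e1 i j)
    rw [e2]
    apply integral_nonneg
    intro x
    show (0:ℝ) ≤ ∑ i, ∑ j, β i * (ψ i x * ψ j x) * β j
    have e3 : (∑ i, ∑ j, β i * (ψ i x * ψ j x) * β j) = (∑ i, β i * ψ i x)^2 := by
      rw [pow_two, Finset.sum_mul_sum]
      apply Finset.sum_congr rfl
      intro i _
      apply Finset.sum_congr rfl
      intro j _
      ring
    rw [e3]
    exact sq_nonneg _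
  have hmean : ∀ (g : 𝒳 → ℝ), Measurable g → ∀ k, (∫ ω, g (X k ω) ∂P) = ∫ x, g x ∂ρ := by
    intro g hg k
    rw [← hident k, integral_map (hX k).aemeasurable hg.aestronglyMeasurable]
  have htail : ∀ (g : 𝒳 → ℝ), Measurable g → (∀ x, |g x| ≤ B^2) →
      (P {ω | (n:ℝ) * ((∫ x, g x ∂ρ) + a) ≤ ∑ k, g (X k ω)}).toReal ≤ E₀ := by
    intro g hg hgb
    have h := hoef P (fun k ω => g (X k ω)) (fun k => hg.comp (hX k))
      (hindep.comp (fun _ => g) (fun _ => hg)) (B^2) (by positivity)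
      (fun k ω => hgb _) (∫ x, g x ∂ρ) (fun k => hmean g hg k) a ha_pos.le
    have e : Real.exp (-((n:ℝ) * a^2) / (2 * (B^2)^2)) = E₀ := by
      rw [hE₀_def]
      congr 1
      ring
    exact h.trans e.le
  -- the events
  set A : Fin J × Fin J → Set Ω := fun p =>
    if p.1 ≤ p.2 then
      {ω | (n:ℝ)⁻¹ * ∑ k, ψ p.1 (X k ω) * ψ p.2 (X k ω) ≤ M p.1 p.2 - a}
    else
      {ω | M p.1 p.2 + a ≤ (n:ℝ)⁻¹ * ∑ k, ψ p.1 (X k ω) * ψ p.2 (X k ω)} with hA_def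
  have hmeasS : ∀ i j : Fin J,
      Measurable (fun ω => (n:ℝ)⁻¹ * ∑ k, ψ i (X k ω) * ψ j (X k ω)) := by
    intro i j
    exact (Finset.measurable_sum _ (fun k _ =>
      ((hψ i).comp (hX k)).mul ((hψ j).comp (hX k)))).const_mul _
  have hAmeas : ∀ p, MeasurableSet (A p) := by
    rintro ⟨i, j⟩
    rw [hA_def]
    dsimp only
    split_ifs
    · exact measurableSet_le (hmeasS i j) measurable_const
    · exact measurableSet_le measurable_const (hmeasS i j)
  have hAbound : ∀ p : Fin J × Fin J, (P (A p)).toReal ≤ E₀ := by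
    rintro ⟨i, j⟩
    rw [hA_def]
    dsimp only
    split_ifs with hij
    · -- lower deviation: use g = -(ψ i * ψ j)
      have hseteq : {ω | (n:ℝ)⁻¹ * ∑ k, ψ i (X k ω) * ψ j (X k ω) ≤ M i j - a}
          = {ω | (n:ℝ) * ((∫ x, -(ψ i x * ψ j x) ∂ρ) + a)
              ≤ ∑ k, -(ψ i (X k ω) * ψ j (X k ω))} := by
        ext ω
        simp only [Set.mem_setOf_eq, integral_neg, ← hM i j, Finset.sum_neg_distrib]
        rw [inv_mul_le_iff₀ hnR]
        constructor <;> intro h <;> nlinarith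
      rw [hseteq]
      exact htail _ (hfmeas i j).neg (fun x => by rw [abs_neg]; exact hfb i j x)
    · have hseteq : {ω | M i j + a ≤ (n:ℝ)⁻¹ * ∑ k, ψ i (X k ω) * ψ j (X k ω)}
          = {ω | (n:ℝ) * ((∫ x, ψ i x * ψ j x ∂ρ) + a)
              ≤ ∑ k, ψ i (X k ω) * ψ j (X k ω)} := by
        ext ω
        simp only [Set.mem_setOf_eq, ← hM i j]
        rw [inv_mul_eq_div, le_div_iff₀ hnR]
        constructor <;> intro h <;> nlinarith
      rw [hseteq]
      exact htail _ (hfmeas i j) (hfb i j)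
  have hunion : P (⋃ p : Fin J × Fin J, A p) ≤ ENNReal.ofReal ((J:ℝ)^2 * E₀) := by
    calc P (⋃ p, A p) ≤ ∑ p : Fin J × Fin J, P (A p) := measure_iUnion_fintype_le _ _
      _ ≤ ∑ _p : Fin J × Fin J, ENNReal.ofReal E₀ := Finset.sum_le_sum (fun p _ => by
            rw [← ENNReal.ofReal_toReal (measure_ne_top P (A p))]
            exact ENNReal.ofReal_le_ofReal (hAbound p))
      _ = ENNReal.ofReal ((J:ℝ)^2 * E₀) := by
            rw [Finset.sum_const, Finset.card_univ]
            rw [ENNReal.ofReal_mul (by positivity)]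
            rw [show ENNReal.ofReal ((J:ℝ)^2) = ((J^2 : ℕ) : ENNReal) by
              rw [← ENNReal.ofReal_natCast]
              congr 1
              push_cast
              ring]
            simp only [Fintype.card_prod, Fintype.card_fin, nsmul_eq_mul]
            congr 1
            push_cast
            ring
  have hcompl : ENNReal.ofReal (1 - (J:ℝ)^2 * E₀) ≤ P ((⋃ p : Fin J × Fin J, A p)ᶜ) := by
    rw [prob_compl_eq_one_sub (MeasurableSet.iUnion (fun p => hAmeas p))]
    calc ENNReal.ofReal (1 - (J:ℝ)^2 * E₀)
        = 1 - ENNReal.ofReal ((J:ℝ)^2 * E₀) := by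
          rw [ENNReal.ofReal_sub _ (by positivity), ENNReal.ofReal_one]
      _ ≤ 1 - P (⋃ p : Fin J × Fin J, A p) := tsub_le_tsub_left hunion 1
  refine le_trans hcompl (measure_mono ?_)
  intro ω hω
  simp only [Set.mem_compl_iff, Set.mem_iUnion, not_exists] at hω
  show u/2 ≤ compat _ L S
  have hMsym : ∀ i j : Fin J, M i j = M j i := by
    intro i j
    rw [hM i j, hM j i]
    simp_rw [mul_comm]
  have hNval : ∀ i j : Fin J,
      (Matrix.of fun j' k => (n : ℝ)⁻¹ * ∑ i', ψ j' (X i' ω) * ψ k (X i' ω)) i j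
        = (n:ℝ)⁻¹ * ∑ k, ψ i (X k ω) * ψ j (X k ω) := fun i j => rfl
  have hNsym : ∀ i j : Fin J,
      (n:ℝ)⁻¹ * (∑ k, ψ i (X k ω) * ψ j (X k ω))
        = (n:ℝ)⁻¹ * ∑ k, ψ j (X k ω) * ψ i (X k ω) := by
    intro i j
    congr 1
    apply Finset.sum_congr rfl
    intro k _
    ring
  have hnot : ∀ i j : Fin J, ω ∉ A (i, j) := fun i j => hω (i, j)
  apply det_lemma M _ L u a hL hu S hS hpsd hcompat ha_def
  · -- h1 : ∀ i j, -a ≤ N i j - M i j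
    intro i j
    rw [hNval]
    rcases le_total i j with hij | hij
    · have h := hnot i j
      rw [hA_def] at h
      simp only [if_pos hij, Set.mem_setOf_eq, not_le] at h
      linarith
    · have h := hnot j i
      rw [hA_def] at h
      simp only [if_pos hij, Set.mem_setOf_eq, not_le] at h
      rw [hMsym i j, hNsym i j]
      linarith
  · -- h2
    intro i j hne
    rw [hNval]
    rcases hne.lt_or_gt with hij | hij
    · have h := hnot j i
      rw [hA_def] at h
      simp only [if_neg (not_le.mpr hij), Set.mem_setOf_eq, not_le] at h
      rw [hMsym i j, hNsym i j]
      linarith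
    · have h := hnot i j
      rw [hA_def] at h
      simp only [if_neg (not_le.mpr hij), Set.mem_setOf_eq, not_le] at h
      linarith
end

section
/- Let X₁,…,X_n be points in a set 𝒳 and ψ₁,…,ψ_J : 𝒳 → ℝ functions with |ψ_j(X_i)| ≤ M for all i, j. For β ∈ ℝ^J write f_β = Σ_{j=1}^J β_j ψ_j and define the empirical norm ‖g‖_n by ‖g‖_n² = n⁻¹ Σ_{i=1}^n g(X_i)². Fix β⁰ ∈ ℝ^J and r > 0, and let 𝒢 = { f_β : ‖β − β⁰‖₁ ≤ r }. Then there exists a universal constant c > 0 such that for every δ with 0 < δ ≤ M r, there is a finite family of functions g₁,…,g_N on 𝒳 with N ≤ exp( c·M²·r²·δ⁻²·log J ) such that every f ∈ 𝒢 satisfies ‖f − g_k‖_n ≤ δ for some k; equivalently, the metric entropy satisfies H(δ, 𝒢, P_n) ≤ c·M²·r²·δ⁻²·log J. -/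
set_option maxHeartbeats 1000000

open Finset
open RealInnerProductSpace

lemma exists_le_of_weighted {ι : Type*} [Fintype ι] (w q : ι → ℝ)
    (hw : ∀ i, 0 ≤ w i) (hw1 : ∑ i, w i = 1) {B : ℝ}
    (h : ∑ i, w i * q i ≤ B) : ∃ i, q i ≤ B := by
  by_contra hc
  push_neg at hc
  obtain ⟨i₀, hi₀⟩ : ∃ i, 0 < w i := by
    by_contra hc2
    push_neg at hc2
    have h0 : ∑ i, w i ≤ 0 := Finset.sum_nonpos (fun i _ => hc2 i)
    rw [hw1] at h0; linarith
  have hlt : ∑ i, w i * B < ∑ i, w i * q i := by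
    apply Finset.sum_lt_sum (fun i _ => mul_le_mul_of_nonneg_left (hc i).le (hw i))
    exact ⟨i₀, Finset.mem_univ _, mul_lt_mul_of_pos_left (hc i₀) hi₀⟩
  have heq : ∑ i, w i * B = B := by rw [← Finset.sum_mul, hw1, one_mul]
  linarith

lemma maurey_step {H : Type*} [NormedAddCommGroup H] [InnerProductSpace ℝ H]
    {ι : Type*} [Fintype ι] (w : ι → ℝ) (hw : ∀ i, 0 ≤ w i) (hw1 : ∑ i, w i = 1)
    (u : ι → H) (R : ℝ) (hu : ∀ i, ‖u i‖ ≤ R) (x : H) :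
    ∃ i, ‖x + (u i - ∑ j, w j • u j)‖ ^ 2 ≤ ‖x‖ ^ 2 + 4 * R ^ 2 := by
  set μ := ∑ j, w j • u j with hμ
  have hμR : ‖μ‖ ≤ R := by
    calc ‖μ‖ ≤ ∑ j, ‖w j • u j‖ := norm_sum_le _ _
    _ ≤ ∑ j, w j * R := by
        refine Finset.sum_le_sum fun j _ => ?_
        rw [norm_smul, Real.norm_eq_abs, abs_of_nonneg (hw j)]
        exact mul_le_mul_of_nonneg_left (hu j) (hw j)
    _ = R := by rw [← Finset.sum_mul, hw1, one_mul]
  have hR0 : 0 ≤ R := le_trans (norm_nonneg μ) hμR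
  apply exists_le_of_weighted w _ hw hw1
  have hzero : ∑ j, w j • (u j - μ) = (0 : H) := by
    simp only [smul_sub]
    rw [Finset.sum_sub_distrib, ← Finset.sum_smul, hw1, one_smul, sub_self]
  have hexp : ∑ j, w j * ‖x + (u j - μ)‖ ^ 2
      = ‖x‖ ^ 2 + 2 * (inner ℝ x (∑ j, w j • (u j - μ)) : ℝ) + ∑ j, w j * ‖u j - μ‖ ^ 2 := by
    have h1 : ∀ j, w j * ‖x + (u j - μ)‖ ^ 2
        = w j * ‖x‖ ^ 2 + 2 * (w j * (inner ℝ x (u j - μ) : ℝ)) + w j * ‖u j - μ‖ ^ 2 :=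
      fun j => by rw [norm_add_sq_real]; ring
    rw [Finset.sum_congr rfl (fun j _ => h1 j), Finset.sum_add_distrib, Finset.sum_add_distrib,
      ← Finset.sum_mul, hw1, one_mul, inner_sum]
    simp only [real_inner_smul_right]
    rw [Finset.mul_sum]
  calc ∑ j, w j * ‖x + (u j - μ)‖ ^ 2
      = ‖x‖ ^ 2 + 2 * (inner ℝ x (∑ j, w j • (u j - μ)) : ℝ) + ∑ j, w j * ‖u j - μ‖ ^ 2 := hexp
    _ = ‖x‖ ^ 2 + ∑ j, w j * ‖u j - μ‖ ^ 2 := by rw [hzero, inner_zero_right]; ring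
    _ ≤ ‖x‖ ^ 2 + ∑ j, w j * (4 * R ^ 2) := by
        gcongr with j hj
        · exact hw j
        · have h1 : ‖u j - μ‖ ≤ 2 * R := by
            calc ‖u j - μ‖ ≤ ‖u j‖ + ‖μ‖ := norm_sub_le _ _
            _ ≤ 2 * R := by linarith [hu j]
          calc ‖u j - μ‖ ^ 2 ≤ (2 * R) ^ 2 := by
                exact pow_le_pow_left₀ (norm_nonneg _) h1 2
          _ = 4 * R ^ 2 := by ring
    _ = ‖x‖ ^ 2 + 4 * R ^ 2 := by rw [← Finset.sum_mul, hw1, one_mul]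

lemma maurey {H : Type*} [NormedAddCommGroup H] [InnerProductSpace ℝ H]
    {ι : Type*} [Fintype ι] (w : ι → ℝ) (hw : ∀ i, 0 ≤ w i) (hw1 : ∑ i, w i = 1)
    (u : ι → H) (R : ℝ) (hu : ∀ i, ‖u i‖ ≤ R) (m : ℕ) (hm : 1 ≤ m) :
    ∃ f : Fin m → ι,
      ‖(∑ k, u (f k)) - (m : ℝ) • (∑ j, w j • u j)‖ ^ 2 ≤ 4 * m * R ^ 2 := by
  induction m, hm using Nat.le_induction with
  | base =>
      obtain ⟨i, hi⟩ := maurey_step w hw hw1 u R hu 0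
      refine ⟨fun _ => i, ?_⟩
      simp only [norm_zero, zero_add, zero_pow, ne_eq, OfNat.ofNat_ne_zero,
        not_false_eq_true] at hi
      simpa using hi
  | succ m hm ih =>
      obtain ⟨f, hf⟩ := ih
      set μ := ∑ j, w j • u j with hμ
      obtain ⟨i, hi⟩ := maurey_step w hw hw1 u R hu ((∑ k, u (f k)) - (m : ℝ) • μ)
      refine ⟨(Fin.snoc f i : Fin (m+1) → ι), ?_⟩
      have hsum : ∑ k : Fin (m+1), u ((Fin.snoc f i : Fin (m+1) → ι) k) = (∑ k, u (f k)) + u i := by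
        rw [Fin.sum_univ_castSucc]
        simp
      rw [hsum]
      have hre : (∑ k, u (f k)) + u i - ((m : ℕ) + 1 : ℝ) • μ
          = ((∑ k, u (f k)) - (m : ℝ) • μ) + (u i - μ) := by
        rw [add_smul, one_smul]; abel
      push_cast
      rw [hre]
      calc ‖((∑ k, u (f k)) - (m : ℝ) • μ) + (u i - μ)‖ ^ 2
          ≤ ‖(∑ k, u (f k)) - (m : ℝ) • μ‖ ^ 2 + 4 * R ^ 2 := hi
        _ ≤ 4 * m * R ^ 2 + 4 * R ^ 2 := by linarith
        _ = 4 * (m + 1) * R ^ 2 := by ring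

lemma max_add_max_neg (a : ℝ) : max a 0 + max (-a) 0 = |a| := by
  rcases le_total a 0 with h | h
  · rw [max_eq_right h, max_eq_left (by linarith : (0:ℝ) ≤ -a), abs_of_nonpos h]; ring
  · rw [max_eq_left h, max_eq_right (by linarith : -a ≤ 0), abs_of_nonneg h]; ring

lemma max_sub_max_neg (a : ℝ) : max a 0 - max (-a) 0 = a := by
  rcases le_total a 0 with h | h
  · rw [max_eq_right h, max_eq_left (by linarith : (0:ℝ) ≤ -a)]; ring
  · rw [max_eq_left h, max_eq_right (by linarith : -a ≤ 0)]; ring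

/-- Metric entropy, in the empirical norm, of the image of an `ℓ₁`-ball of coefficients
under a uniformly bounded dictionary: there is a universal constant `c > 0` such that the
class `𝒢 = { Σ_j β_j ψ_j : ‖β − β⁰‖₁ ≤ r }` admits, for every `0 < δ ≤ M·r`, a `δ`-cover
in `‖·‖_n` of cardinality at most `exp(c·M²·r²·δ⁻²·log J)`. -/
theorem stmt6 :
    ∃ c : ℝ, 0 < c ∧
    ∀ (𝒳 : Type) (n J : ℕ), 0 < n → 2 ≤ J →
    ∀ (X : Fin n → 𝒳) (ψ : Fin J → 𝒳 → ℝ) (M : ℝ), 0 < M →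
      (∀ (j : Fin J) (i : Fin n), |ψ j (X i)| ≤ M) →
    ∀ (β₀ : Fin J → ℝ) (r : ℝ), 0 < r →
    ∀ δ : ℝ, 0 < δ → δ ≤ M * r →
    ∃ (N : ℕ) (g : Fin N → 𝒳 → ℝ),
      (N : ℝ) ≤ Real.exp (c * M ^ 2 * r ^ 2 * (δ⁻¹) ^ 2 * Real.log J) ∧
      ∀ β : Fin J → ℝ, (∑ j, |β j - β₀ j|) ≤ r →
        ∃ k : Fin N,
          Real.sqrt ((n : ℝ)⁻¹ * ∑ i, (∑ j, β j * ψ j (X i) - g k (X i)) ^ 2) ≤ δ := by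
  refine ⟨15, by norm_num, ?_⟩
  intro 𝒳 n J hn hJ X ψ M hM hψ β₀ r hr δ hδ hδMr
  set t : ℝ := M * r / δ with ht_def
  have ht1 : 1 ≤ t := (one_le_div hδ).mpr hδMr
  set m : ℕ := ⌈4 * t ^ 2⌉₊ with hm_def
  have hm_ge : 4 * t ^ 2 ≤ (m : ℝ) := Nat.le_ceil _
  have hm_le : (m : ℝ) ≤ 5 * t ^ 2 := by
    have h1 : (m : ℝ) < 4 * t ^ 2 + 1 := Nat.ceil_lt_add_one (by positivity)
    nlinarith
  have hm1 : 1 ≤ m := by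
    have h0 : (0:ℝ) < m := by nlinarith
    exact_mod_cast Nat.one_le_cast.mpr (by exact_mod_cast h0)
  have hm0 : (0:ℝ) < m := by exact_mod_cast hm1
  clear_value t m
  -- the index type and the cover
  set N : ℕ := Fintype.card (Fin m → (Fin J × Bool) ⊕ Unit) with hN_def
  have hNcard : N = (2 * J + 1) ^ m := by
    rw [hN_def]
    simp [Fintype.card_fun]
    ring_nf
  set e : (Fin m → (Fin J × Bool) ⊕ Unit) ≃ Fin N := Fintype.equivFin _ with he_def
  set vert : (Fin J × Bool) ⊕ Unit → 𝒳 → ℝ :=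
    Sum.elim (fun jb x => (if jb.2 then r else -r) * ψ jb.1 x) (fun _ _ => 0) with hvert_def
  set g : Fin N → 𝒳 → ℝ :=
    fun k x => (∑ j, β₀ j * ψ j x) + (m : ℝ)⁻¹ * ∑ i : Fin m, vert (e.symm k i) x with hg_def
  refine ⟨N, g, ?_, ?_⟩
  · -- cardinality bound
    have hJ3 : (2 * J + 1) ^ m ≤ (J ^ 3) ^ m := by
      apply Nat.pow_le_pow_left
      have h2 : 2 * 2 ≤ J * J := Nat.mul_le_mul hJ hJ
      nlinarith
    have hJ1 : (1:ℝ) ≤ (J:ℝ) := by exact_mod_cast le_trans (by norm_num) hJ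
    have htsq : t ^ 2 = M ^ 2 * r ^ 2 * (δ⁻¹) ^ 2 := by
      rw [ht_def]; field_simp
    calc (N : ℝ) = (((2 * J + 1) ^ m : ℕ) : ℝ) := by rw [hNcard]
      _ ≤ (((J ^ 3) ^ m : ℕ) : ℝ) := by exact_mod_cast hJ3
      _ = (J:ℝ) ^ (3 * m) := by push_cast; rw [← pow_mul]
      _ = Real.exp ((3 * m : ℕ) * Real.log J) := by
          rw [Real.exp_nat_mul, Real.exp_log (by linarith)]
      _ ≤ Real.exp (15 * M ^ 2 * r ^ 2 * (δ⁻¹) ^ 2 * Real.log J) := by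
          apply Real.exp_le_exp.mpr
          apply mul_le_mul_of_nonneg_right _ (Real.log_nonneg hJ1)
          have : 15 * M ^ 2 * r ^ 2 * (δ⁻¹) ^ 2 = 15 * t ^ 2 := by rw [htsq]; ring
          rw [this]
          push_cast
          linarith
  · -- coverage
    intro β hβ
    set β' : Fin J → ℝ := fun j => β j - β₀ j with hβ'_def
    set v : Fin J → EuclideanSpace ℝ (Fin n) := fun j => WithLp.toLp 2 (fun i => ψ j (X i)) with hv_def
    set w : (Fin J × Bool) ⊕ Unit → ℝ := Sum.elim
      (fun jb => (if jb.2 then max (β' jb.1) 0 else max (-(β' jb.1)) 0) / r)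
      (fun _ => 1 - (∑ j, |β' j|) / r) with hw_def
    set u : (Fin J × Bool) ⊕ Unit → EuclideanSpace ℝ (Fin n) := Sum.elim
      (fun jb => ((if jb.2 then r else -r) : ℝ) • v jb.1) (fun _ => 0) with hu_def
    have hw0 : ∀ i, 0 ≤ w i := by
      rintro (⟨j, b⟩ | _)
      · cases b <;> · simp [hw_def]; positivity
      · simp only [hw_def, Sum.elim_inr]
        rw [sub_nonneg, div_le_one hr]
        exact hβ
    have hw1 : ∑ i, w i = 1 := by
      rw [hw_def]
      rw [Fintype.sum_sum_type, Fintype.sum_prod_type]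
      simp only [Sum.elim_inl, Sum.elim_inr, Fintype.sum_bool, reduceIte, Bool.false_eq_true, ite_false, ite_true]
      have h1 : ∑ j, (max (β' j) 0 / r + max (-(β' j)) 0 / r) = (∑ j, |β' j|) / r := by
        rw [Finset.sum_div]
        exact Finset.sum_congr rfl fun j _ => by
          rw [← add_div, max_add_max_neg]
      simp only [Finset.univ_unique, Finset.sum_singleton]
      rw [h1]
      ring
    have hμ : ∑ i, w i • u i = ∑ j, β' j • v j := by
      rw [hw_def, hu_def]
      rw [Fintype.sum_sum_type, Fintype.sum_prod_type]
      simp only [Sum.elim_inl, Sum.elim_inr, Fintype.sum_bool, reduceIte, Bool.false_eq_true, ite_false, ite_true, smul_zero]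
      have h1 : ∀ j : Fin J,
          (max (β' j) 0 / r) • ((r : ℝ) • v j) + (max (-(β' j)) 0 / r) • ((-r : ℝ) • v j)
          = β' j • v j := by
        intro j
        rw [smul_smul, smul_smul, ← add_smul]
        congr 1
        rw [div_mul_cancel₀ _ hr.ne', mul_neg, div_mul_cancel₀ _ hr.ne']
        have := max_sub_max_neg (β' j)
        linarith
      rw [Finset.sum_congr rfl fun j _ => h1 j]
      simp
    set R : ℝ := r * (M * Real.sqrt n) with hR_def
    have hv_norm : ∀ j, ‖v j‖ ≤ M * Real.sqrt n := by
      intro j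
      rw [EuclideanSpace.norm_eq]
      have hsum : (∑ i, ‖v j i‖ ^ 2) ≤ (n : ℝ) * M ^ 2 := by
        calc ∑ i, ‖v j i‖ ^ 2 ≤ ∑ _i : Fin n, M ^ 2 := by
              refine Finset.sum_le_sum fun i _ => ?_
              have h := hψ j i
              have h0 := abs_nonneg (ψ j (X i))
              have hvv : ‖v j i‖ = |ψ j (X i)| := rfl
              rw [hvv]
              nlinarith
          _ = (n : ℝ) * M ^ 2 := by
              simp [Finset.sum_const, Finset.card_univ, nsmul_eq_mul]
      calc Real.sqrt (∑ i, ‖v j i‖ ^ 2) ≤ Real.sqrt ((n:ℝ) * M ^ 2) := Real.sqrt_le_sqrt hsum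
        _ = M * Real.sqrt n := by
            rw [Real.sqrt_mul (Nat.cast_nonneg n), Real.sqrt_sq hM.le]
            ring
    have hu_norm : ∀ i, ‖u i‖ ≤ R := by
      rintro (⟨j, b⟩ | _)
      · simp only [hu_def, Sum.elim_inl]
        rw [norm_smul, Real.norm_eq_abs]
        have habs : |if b then r else -r| = r := by
          cases b <;> simp [abs_neg, abs_of_pos hr]
        rw [habs, hR_def]
        exact mul_le_mul_of_nonneg_left (hv_norm j) hr.le
      · simp only [hu_def, Sum.elim_inr, norm_zero, hR_def]
        positivity
    obtain ⟨f, hf⟩ := maurey w hw0 hw1 u R hu_norm m hm1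
    refine ⟨e f, ?_⟩
    have hek : e.symm (e f) = f := e.symm_apply_apply f
    -- identify the empirical vector with μ - m⁻¹ • S
    set S : EuclideanSpace ℝ (Fin n) := ∑ k, u (f k) with hS_def
    set μ : EuclideanSpace ℝ (Fin n) := ∑ j, w j • u j with hμ_def
    have heval : ∀ i : Fin n,
        ∑ j, β j * ψ j (X i) - g (e f) (X i) = (μ - (m : ℝ)⁻¹ • S) i := by
      intro i
      have hμi : μ i = ∑ j, β' j * ψ j (X i) := by
        rw [hμ, WithLp.ofLp_sum, Finset.sum_apply]
        rfl
      have hvu : ∀ (a : (Fin J × Bool) ⊕ Unit) (i : Fin n), u a i = vert a (X i) := by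
        rintro (jb | z) i <;> rfl
      have hSi : S i = ∑ k : Fin m, vert (f k) (X i) := by
        rw [hS_def, WithLp.ofLp_sum, Finset.sum_apply]
        exact Finset.sum_congr rfl fun k _ => hvu (f k) i
      have : (μ - (m : ℝ)⁻¹ • S) i = μ i - (m : ℝ)⁻¹ * S i := rfl
      rw [this, hμi, hSi, hg_def]
      simp only [hek]
      have hsplit : ∑ j, β j * ψ j (X i) - ((∑ j, β₀ j * ψ j (X i))
          + (m : ℝ)⁻¹ * ∑ k : Fin m, vert (f k) (X i))
          = ∑ j, (β j * ψ j (X i) - β₀ j * ψ j (X i))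
            - (m : ℝ)⁻¹ * ∑ k : Fin m, vert (f k) (X i) := by
        rw [Finset.sum_sub_distrib]; ring
      rw [hsplit, hβ'_def]
      congr 1
      exact Finset.sum_congr rfl fun j _ => by ring
    have hkey : ∑ i, (∑ j, β j * ψ j (X i) - g (e f) (X i)) ^ 2
        = ‖μ - (m : ℝ)⁻¹ • S‖ ^ 2 := by
      rw [EuclideanSpace.norm_eq, Real.sq_sqrt (by positivity)]
      exact Finset.sum_congr rfl fun i _ => by
        rw [heval i, Real.norm_eq_abs, sq_abs]
    have hdiff : μ - (m : ℝ)⁻¹ • S = (-(m : ℝ)⁻¹) • (S - (m : ℝ) • μ) := by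
      rw [smul_sub, smul_smul]
      rw [neg_mul, inv_mul_cancel₀ hm0.ne']
      simp [neg_smul, sub_eq_add_neg]
      abel
    clear_value g e vert v w u S μ R
    have hbound : ‖μ - (m : ℝ)⁻¹ • S‖ ^ 2 ≤ 4 * R ^ 2 / m := by
      rw [hdiff, norm_smul, mul_pow, Real.norm_eq_abs, abs_neg,
        abs_of_pos (by positivity : (0:ℝ) < (m:ℝ)⁻¹)]
      rw [div_eq_mul_inv, mul_comm (4 * R ^ 2)]
      calc (m : ℝ)⁻¹ ^ 2 * ‖S - (m : ℝ) • μ‖ ^ 2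
          ≤ (m : ℝ)⁻¹ ^ 2 * (4 * m * R ^ 2) := by
            apply mul_le_mul_of_nonneg_left _ (by positivity)
            exact hf
        _ = (m : ℝ)⁻¹ * (4 * R ^ 2) := by
            field_simp
    have hRsq : R ^ 2 = r ^ 2 * M ^ 2 * n := by
      rw [hR_def, mul_pow, mul_pow, Real.sq_sqrt (Nat.cast_nonneg n)]
      ring
    have hfinal : (n : ℝ)⁻¹ * ∑ i, (∑ j, β j * ψ j (X i) - g (e f) (X i)) ^ 2 ≤ δ ^ 2 := by
      rw [hkey]
      have hn0 : (0:ℝ) < n := by exact_mod_cast hn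
      calc (n : ℝ)⁻¹ * ‖μ - (m : ℝ)⁻¹ • S‖ ^ 2
          ≤ (n : ℝ)⁻¹ * (4 * R ^ 2 / m) := by
            apply mul_le_mul_of_nonneg_left hbound (by positivity)
        _ = 4 * M ^ 2 * r ^ 2 / m := by rw [hRsq]; field_simp
        _ ≤ δ ^ 2 := by
            rw [div_le_iff₀ hm0]
            have h4t : 4 * t ^ 2 * δ ^ 2 = 4 * M ^ 2 * r ^ 2 := by
              rw [ht_def]; field_simp
            nlinarith [hδ.le, sq_nonneg δ]
    calc Real.sqrt ((n : ℝ)⁻¹ * ∑ i, (∑ j, β j * ψ j (X i) - g (e f) (X i)) ^ 2)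
        ≤ Real.sqrt (δ ^ 2) := Real.sqrt_le_sqrt hfinal
      _ = δ := Real.sqrt_sq hδ.le
end

section
/- Let D ≥ 2 and s > 0 be fixed and let (c_j)_{j≥1} be the nondecreasing enumeration (with multiplicity) of the multiset { ∏_{k=1}^D 𝐣^k : 𝐣 ∈ (ℕ⁺)^D }; equivalently c_j = min{ m ∈ ℕ⁺ : T_D(m) ≥ j }. Define the weights w_j = ( j / max(log^{D−1} j, 1) )^{2s}. Then there exist constants C₁ > 0 and C₂ > 0 depending only on s and D such that for every sequence (β_j)_{j≥1} of real numbers, C₁ · Σ_{j=1}^∞ w_j β_j² ≤ Σ_{j=1}^∞ c_j^{2s} β_j² ≤ C₂ · Σ_{j=1}^∞ w_j β_j² (as equalities/inequalities in [0, ∞]). In particular, for any Q > 0, the ellipsoid { β : Σ_j w_j β_j² ≤ Q²/C₂ } is contained in { β : Σ_j c_j^{2s} β_j² ≤ Q² }, which is contained in { β : Σ_j w_j β_j² ≤ Q²/C₁ }. -/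
open Finset Real Filter


/-- The `D`-fold divisor function: the number of ordered `D`-tuples of positive
integers whose product is `n`. -/
noncomputable def tauD (D n : ℕ) : ℕ :=
  Nat.card {f : Fin D → ℕ+ // (∏ k, ((f k : ℕ))) = n}

/-- `T_D(x) = Σ_{n ≤ x} τ_D(n)`, the sum over positive integers `n ≤ x`. -/
noncomputable def TD (D : ℕ) (x : ℝ) : ℕ :=
  ∑ n ∈ Finset.Icc 1 ⌊x⌋₊, tauD D n

/-- The `j`-th element (for `j ≥ 1`) of the nondecreasing enumeration (with multiplicity)
of the multiset `{ ∏_k 𝐣^k : 𝐣 ∈ (ℕ⁺)^D }`, characterized as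
`c_j = min { m ∈ ℕ⁺ : T_D(m) ≥ j }`. -/
noncomputable def cseq (D j : ℕ) : ℕ :=
  sInf {m : ℕ | 0 < m ∧ j ≤ TD D (m : ℝ)}

/-- The weights `w_j = (j / max(log^{D−1} j, 1))^{2s}`. -/
noncomputable def wgt (D : ℕ) (s : ℝ) (j : ℕ) : ℝ :=
  ((j : ℝ) / max ((Real.log j) ^ (D - 1)) 1) ^ (2 * s)



noncomputable def bx (D m : ℕ) : Finset (Fin D → ℕ) :=
  (Fintype.piFinset fun _ => Finset.Icc 1 m).filter (fun f => ∏ k, f k ≤ m)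

lemma mem_bx {D m : ℕ} {f : Fin D → ℕ} :
    f ∈ bx D m ↔ (∀ k, 1 ≤ f k) ∧ ∏ k, f k ≤ m := by
  unfold bx
  simp only [Finset.mem_filter, Fintype.mem_piFinset, Finset.mem_Icc]
  constructor
  · rintro ⟨h1, h2⟩; exact ⟨fun k => (h1 k).1, h2⟩
  · rintro ⟨h1, h2⟩
    refine ⟨fun k => ⟨h1 k, le_trans ?_ h2⟩, h2⟩
    exact Finset.single_le_prod' (fun i _ => h1 i) (Finset.mem_univ k)

lemma bx_one_card (m : ℕ) : (bx 1 m).card = m := by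
  rw [show (bx 1 m).card = (Finset.Icc 1 m).card from ?_, Nat.card_Icc]
  · omega
  · apply Finset.card_bij (fun f _ => f 0)
    · intro f hf
      rw [mem_bx] at hf
      simp only [Finset.mem_Icc]
      refine ⟨hf.1 0, le_trans ?_ hf.2⟩
      rw [Fin.prod_univ_one]
    · intro f hf g hg h
      funext k
      rw [Fin.eq_zero k]; exact h
    · intro j hj
      refine ⟨fun _ => j, ?_, rfl⟩
      rw [mem_bx, Fin.prod_univ_one]
      simp only [Finset.mem_Icc] at hj
      exact ⟨fun _ => hj.1, hj.2⟩

lemma bx_succ_card (D m : ℕ) :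
    (bx (D+1) m).card = ∑ j ∈ Finset.Icc 1 m, (bx D (m / j)).card := by
  rw [Finset.card_eq_sum_card_fiberwise (f := fun f => f 0) (t := Finset.Icc 1 m) ?_]
  · refine Finset.sum_congr rfl fun j hj => ?_
    simp only [Finset.mem_Icc] at hj
    apply Finset.card_bij (fun f _ => Fin.tail f)
    · intro f hf
      simp only [Finset.mem_filter] at hf
      obtain ⟨hf, hf0⟩ := hf
      rw [mem_bx] at hf ⊢
      refine ⟨fun k => hf.1 _, ?_⟩
      rw [Nat.le_div_iff_mul_le (by omega), mul_comm]
      have := hf.2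
      rwa [Fin.prod_univ_succ, hf0] at this
    · intro f hf g hg h
      simp only [Finset.mem_filter] at hf hg
      funext k
      refine Fin.cases ?_ ?_ k
      · rw [hf.2, hg.2]
      · intro i; exact congrFun h i
    · intro g hg
      rw [mem_bx] at hg
      refine ⟨Fin.cons j g, ?_, ?_⟩
      · simp only [Finset.mem_filter, Fin.cons_zero, and_true]
        rw [mem_bx]
        constructor
        · intro k
          refine Fin.cases ?_ ?_ k
          · simpa using hj.1
          · intro i; simpa using hg.1 i
        · rw [Fin.prod_univ_succ]
          simp only [Fin.cons_zero, Fin.cons_succ]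
          calc j * ∏ i, g i ≤ j * (m / j) := by
                exact Nat.mul_le_mul_left j hg.2
            _ ≤ m := Nat.mul_div_le m j
      · simp [Fin.tail_cons]
  · intro f hf
    rw [Finset.mem_coe, mem_bx] at hf
    simp only [Finset.mem_coe, Finset.mem_Icc]
    refine ⟨hf.1 0, le_trans ?_ hf.2⟩
    exact Finset.single_le_prod' (fun i _ => hf.1 i) (Finset.mem_univ 0)

lemma tauD_eq_card (D m n : ℕ) (hn : 1 ≤ n) (hnm : n ≤ m) :
    tauD D n = ((bx D m).filter (fun f => ∏ k, f k = n)).card := by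
  rw [tauD, ← Nat.card_eq_finsetCard]
  apply Nat.card_congr
  refine ⟨fun f => ⟨fun k => (f.1 k : ℕ), ?_⟩, fun g => ⟨fun k => ⟨g.1 k, ?_⟩, ?_⟩, ?_, ?_⟩
  · simp only [Finset.mem_filter, mem_bx]
    exact ⟨⟨fun k => (f.1 k).2, le_trans (le_of_eq f.2) hnm⟩, f.2⟩
  · have hg := g.2
    simp only [Finset.mem_filter, mem_bx] at hg
    exact hg.1.1 k
  · have hg := g.2
    simp only [Finset.mem_filter, mem_bx] at hg
    exact hg.2
  · intro f; ext k; rfl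
  · intro g; ext k; rfl

lemma TD_eq_card (D m : ℕ) : TD D (m : ℝ) = (bx D m).card := by
  rw [TD, Nat.floor_natCast]
  rw [Finset.card_eq_sum_card_fiberwise (f := fun f => ∏ k, f k) (t := Finset.Icc 1 m) ?_]
  · refine Finset.sum_congr rfl fun n hn => ?_
    simp only [Finset.mem_Icc] at hn
    exact tauD_eq_card D m n hn.1 hn.2
  · intro f hf
    rw [Finset.mem_coe, mem_bx] at hf
    simp only [Finset.mem_coe, Finset.mem_Icc]
    exact ⟨Finset.one_le_prod' (fun i _ => hf.1 i), hf.2⟩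

lemma sum_inv_Icc (n : ℕ) : ∑ j ∈ Finset.Icc 1 n, ((j:ℝ))⁻¹ = (harmonic n : ℝ) := by
  rw [harmonic_eq_sum_Icc]
  push_cast
  rfl

lemma bx_card_le (E : ℕ) : ∀ m : ℕ, 1 ≤ m →
    ((bx (E+1) m).card : ℝ) ≤ m * (1 + Real.log m) ^ E := by
  induction E with
  | zero => intro m hm; simp [bx_one_card]
  | succ E ih =>
    intro m hm
    have hlog : (0:ℝ) ≤ Real.log m := Real.log_natCast_nonneg m
    have h1 : (0:ℝ) ≤ 1 + Real.log m := by linarith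
    rw [bx_succ_card]
    push_cast
    have step : ∀ j ∈ Finset.Icc 1 m, ((bx (E+1) (m / j)).card : ℝ)
        ≤ ((m:ℝ) * (j:ℝ)⁻¹) * (1 + Real.log m) ^ E := by
      intro j hj
      simp only [Finset.mem_Icc] at hj
      have hq1 : 1 ≤ m / j := (Nat.one_le_div_iff (by omega)).2 hj.2
      have hqm : m / j ≤ m := Nat.div_le_self m j
      calc ((bx (E+1) (m / j)).card : ℝ)
          ≤ (m / j : ℕ) * (1 + Real.log (m / j : ℕ)) ^ E := ih _ hq1
        _ ≤ ((m:ℝ) * (j:ℝ)⁻¹) * (1 + Real.log m) ^ E := by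
            apply mul_le_mul
            · rw [← div_eq_mul_inv]
              exact Nat.cast_div_le
            · apply pow_le_pow_left₀
              · have : (0:ℝ) ≤ Real.log (m / j : ℕ) := Real.log_natCast_nonneg _
                linarith
              · have : Real.log (m / j : ℕ) ≤ Real.log m :=
                  Real.log_le_log (by exact_mod_cast hq1) (by exact_mod_cast hqm)
                linarith
            · positivity
            · positivity
    calc (∑ j ∈ Finset.Icc 1 m, ((bx (E+1) (m / j)).card : ℝ))
        ≤ ∑ j ∈ Finset.Icc 1 m, ((m:ℝ) * (j:ℝ)⁻¹) * (1 + Real.log m) ^ E :=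
          Finset.sum_le_sum step
      _ = (m:ℝ) * (1 + Real.log m) ^ E * ∑ j ∈ Finset.Icc 1 m, ((j:ℝ))⁻¹ := by
          rw [Finset.mul_sum]; apply Finset.sum_congr rfl; intros; ring
      _ ≤ (m:ℝ) * (1 + Real.log m) ^ E * (1 + Real.log m) := by
          apply mul_le_mul_of_nonneg_left
          · rw [sum_inv_Icc]; exact harmonic_le_one_add_log m
          · positivity
      _ = m * (1 + Real.log m) ^ (E+1) := by ring

lemma bx_card_ge (E : ℕ) : ∃ c : ℝ, 0 < c ∧ ∃ M : ℕ, 9 ≤ M ∧ ∀ m : ℕ, M ≤ m →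
    c * m * (Real.log m) ^ E ≤ ((bx (E+1) m).card : ℝ) := by
  induction E with
  | zero =>
    exact ⟨1, one_pos, 9, le_refl 9, fun m hm => by simp [bx_one_card]⟩
  | succ E ih =>
    obtain ⟨c, hc, M, hM9, hIH⟩ := ih
    refine ⟨c / (2 * 4 ^ E * 2), by positivity, (M + 3) ^ 2, by nlinarith, ?_⟩
    intro m hm
    set r := Nat.sqrt m with hr
    have hrM : M + 3 ≤ r := by
      rw [hr, Nat.le_sqrt]; nlinarith
    have hr3 : 3 ≤ r := by omega
    have hrm : r ≤ m := Nat.sqrt_le_self m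
    have hm9 : 9 ≤ m := by nlinarith
    have hlogm : 0 < Real.log m := by
      apply Real.log_pos; exact_mod_cast by omega
    have hrr : r + 1 ≤ r * r := by nlinarith
    -- m < (r+1)^2
    have hmr2 : m < (r + 1) ^ 2 := Nat.lt_succ_sqrt' m
    -- termwise bound
    have step : ∀ j ∈ Finset.Icc 1 r,
        (c * ((m:ℝ) / (2 * j)) * ((Real.log m) / 4) ^ E) ≤ ((bx (E+1) (m / j)).card : ℝ) := by
      intro j hj
      simp only [Finset.mem_Icc] at hj
      set q := m / j with hq
      have hq_ge_r : r ≤ q := by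
        calc r ≤ m / r := by
              have h := Nat.sqrt_le' m
              rw [pow_two] at h
              exact (Nat.le_div_iff_mul_le (by omega)).2 h
          _ ≤ q := Nat.div_le_div_left hj.2 (by omega)
      have hqM : M ≤ q := by omega
      have hq1 : 1 ≤ q := by omega
      -- (m:ℝ)/(2*j) ≤ q
      have hq_half : (m:ℝ) / (2 * j) ≤ (q:ℝ) := by
        have h1 : m < (q + 1) * j := by
          have hmod := Nat.div_add_mod m j
          have h2 : m % j < j := Nat.mod_lt m (by omega)
          calc m = j * q + m % j := hmod.symm
            _ < j * q + j := by omega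
            _ = (q + 1) * j := by ring
        have h2 : (m:ℝ) < ((q:ℝ) + 1) * (j:ℝ) := by exact_mod_cast h1
        have hj1r : (1:ℝ) ≤ (j:ℝ) := by exact_mod_cast hj.1
        have hq1r : (1:ℝ) ≤ (q:ℝ) := by exact_mod_cast hq1
        rw [div_le_iff₀ (by nlinarith)]
        nlinarith
      -- log m / 4 ≤ log q
      have hlogq : Real.log m / 4 ≤ Real.log q := by
        have h1 : Real.log m ≤ 4 * Real.log r := by
          have hm4 : (m:ℝ) ≤ ((r*r)*(r*r) : ℕ) := by
            exact_mod_cast le_trans (le_of_lt hmr2) (by nlinarith : (r+1)^2 ≤ (r*r)*(r*r))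
          calc Real.log m ≤ Real.log (((r*r)*(r*r) : ℕ)) :=
                Real.log_le_log (by exact_mod_cast by omega) hm4
            _ = 4 * Real.log r := by
                push_cast
                rw [show ((r:ℝ)*r)*((r:ℝ)*r) = (r:ℝ)^4 by ring, Real.log_pow]
                push_cast; ring
        have h2 : Real.log r ≤ Real.log q :=
          Real.log_le_log (by exact_mod_cast by omega) (by exact_mod_cast hq_ge_r)
        linarith
      calc c * ((m:ℝ) / (2 * j)) * ((Real.log m) / 4) ^ E
          ≤ c * q * (Real.log q) ^ E := by
            apply mul_le_mul
            · exact mul_le_mul_of_nonneg_left hq_half (le_of_lt hc)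
            · exact pow_le_pow_left₀ (by positivity) hlogq E
            · positivity
            · positivity
        _ ≤ ((bx (E+1) q).card : ℝ) := hIH q hqM
    -- assemble
    rw [bx_succ_card]
    push_cast
    have hsub : Finset.Icc 1 r ⊆ Finset.Icc 1 m := Finset.Icc_subset_Icc_right hrm
    calc c / (2 * 4 ^ E * 2) * m * (Real.log m) ^ (E+1)
        = c * ((m:ℝ) / 2) * ((Real.log m) / 4) ^ E * ((Real.log m) / 2) := by
          rw [div_pow]; push_cast; field_simp; ring
      _ ≤ c * ((m:ℝ) / 2) * ((Real.log m) / 4) ^ E * (harmonic r : ℝ) := by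
          apply mul_le_mul_of_nonneg_left _ (by positivity)
          have h1 : Real.log m ≤ 2 * Real.log ((r:ℝ) + 1) := by
            calc Real.log m ≤ Real.log (((r+1:ℕ):ℝ) ^ 2) := by
                  apply Real.log_le_log (by exact_mod_cast by omega)
                  exact_mod_cast le_of_lt hmr2
              _ = 2 * Real.log ((r:ℝ) + 1) := by
                  rw [Real.log_pow]; push_cast; ring
          have h2 : Real.log ((r:ℝ) + 1) ≤ (harmonic r : ℝ) := by
            have := log_add_one_le_harmonic r
            push_cast at this
            exact this
          linarith
      _ = ∑ j ∈ Finset.Icc 1 r, c * ((m:ℝ) / (2 * j)) * ((Real.log m) / 4) ^ E := by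
          rw [← sum_inv_Icc, Finset.mul_sum]
          apply Finset.sum_congr rfl
          intro j hj
          simp only [Finset.mem_Icc] at hj
          have : (j:ℝ) ≠ 0 := by exact_mod_cast by omega
          field_simp
      _ ≤ ∑ j ∈ Finset.Icc 1 r, ((bx (E+1) (m / j)).card : ℝ) := Finset.sum_le_sum step
      _ ≤ ∑ j ∈ Finset.Icc 1 m, ((bx (E+1) (m / j)).card : ℝ) := by
          apply Finset.sum_le_sum_of_subset_of_nonneg hsub
          intros; positivity

lemma tauD_pos (D n : ℕ) (hD : 1 ≤ D) (hn : 1 ≤ n) : 1 ≤ tauD D n := by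
  rw [tauD_eq_card D n n hn le_rfl]
  apply Finset.card_pos.2
  refine ⟨fun k => if k = (⟨0, by omega⟩ : Fin D) then n else 1, ?_⟩
  have hprod : ∏ k, (if k = (⟨0, by omega⟩ : Fin D) then n else 1) = n := by
    rw [Finset.prod_ite_eq' Finset.univ (⟨0, by omega⟩ : Fin D) (fun _ => n)]
    simp
  simp only [Finset.mem_filter, mem_bx]
  refine ⟨⟨fun k => ?_, le_of_eq hprod⟩, hprod⟩
  by_cases h : k = (⟨0, by omega⟩ : Fin D) <;> simp [h, hn]

lemma TD_ge (D m : ℕ) (hD : 1 ≤ D) : m ≤ TD D (m : ℝ) := by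
  rw [TD, Nat.floor_natCast]
  calc m = ∑ n ∈ Finset.Icc 1 m, 1 := by simp [Nat.card_Icc]
    _ ≤ ∑ n ∈ Finset.Icc 1 m, tauD D n := by
        apply Finset.sum_le_sum
        intro n hn
        simp only [Finset.mem_Icc] at hn
        exact tauD_pos D n hD hn.1

lemma cseq_mem (D j : ℕ) (hD : 1 ≤ D) (hj : 1 ≤ j) :
    0 < cseq D j ∧ j ≤ TD D ((cseq D j : ℕ) : ℝ) ∧ cseq D j ≤ j :=
  have hne : j ∈ {m : ℕ | 0 < m ∧ j ≤ TD D (m : ℝ)} := ⟨hj, TD_ge D j hD⟩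
  have h1 := Nat.sInf_mem (Set.nonempty_of_mem hne)
  ⟨h1.1, h1.2, Nat.sInf_le hne⟩

lemma cseq_min (D j m : ℕ) (hm : 0 < m) (hlt : m < cseq D j) : TD D (m : ℝ) < j := by
  by_contra h
  unfold cseq at hlt
  exact absurd (Nat.sInf_le (show m ∈ {m : ℕ | 0 < m ∧ j ≤ TD D (m : ℝ)} from
    ⟨hm, le_of_not_gt h⟩)) (by omega)

lemma cseq_bounds_abstract (E : ℕ) (hE : 1 ≤ E)
    (cs : ℕ → ℕ) (T : ℕ → ℕ)
    (hub : ∀ m : ℕ, 1 ≤ m → (T m : ℝ) ≤ m * (1 + Real.log m) ^ E)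
    (c : ℝ) (hc : 0 < c) (M : ℕ) (hM9 : 9 ≤ M)
    (hlb : ∀ m : ℕ, M ≤ m → c * m * (Real.log m) ^ E ≤ (T m : ℝ))
    (hmem : ∀ j, 1 ≤ j → 0 < cs j ∧ j ≤ T (cs j) ∧ cs j ≤ j)
    (hmin : ∀ j m, 0 < m → m < cs j → T m < j) :
    ∃ K₁ K₂ : ℝ, 0 < K₁ ∧ 0 < K₂ ∧ ∃ J : ℕ, 3 ≤ J ∧ ∀ j : ℕ, J ≤ j →
      K₁ * ((j:ℝ) / (Real.log j) ^ E) ≤ (cs j : ℝ) ∧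
      (cs j : ℝ) ≤ K₂ * ((j:ℝ) / (Real.log j) ^ E) := by
  have hlog3 : (1:ℝ) < Real.log 3 := by
    have h1 : Real.exp 1 < 3 := by
      have := Real.exp_one_lt_d9
      norm_num at this ⊢
      linarith
    calc (1:ℝ) = Real.log (Real.exp 1) := (Real.log_exp 1).symm
      _ < Real.log 3 := Real.log_lt_log (Real.exp_pos 1) h1
  -- lower bound for all j ≥ 3
  have lower : ∀ j : ℕ, 3 ≤ j → ((1:ℝ)/2^E) * ((j:ℝ) / (Real.log j) ^ E) ≤ (cs j : ℝ) := by
    intro j hj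
    obtain ⟨hpos, hTD, hle⟩ := hmem j (by omega)
    have hlogj : (1:ℝ) < Real.log j := lt_of_lt_of_le hlog3
      (Real.log_le_log (by norm_num) (by exact_mod_cast hj))
    have h1 : (j : ℝ) ≤ (cs j : ℝ) * (2 * Real.log j) ^ E := by
      calc (j:ℝ) ≤ (T (cs j) : ℝ) := by exact_mod_cast hTD
        _ ≤ (cs j : ℝ) * (1 + Real.log (cs j)) ^ E := hub _ hpos
        _ ≤ (cs j : ℝ) * (2 * Real.log j) ^ E := by
            apply mul_le_mul_of_nonneg_left _ (by positivity)
            apply pow_le_pow_left₀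
            · have : (0:ℝ) ≤ Real.log (cs j) := Real.log_natCast_nonneg _
              linarith
            · have h2 : Real.log (cs j) ≤ Real.log j :=
                Real.log_le_log (by exact_mod_cast hpos) (by exact_mod_cast hle)
              linarith
    have hL : (0:ℝ) < (Real.log j) ^ E := by positivity
    rw [div_mul_div_comm, one_mul, div_le_iff₀ (by positivity)]
    calc (j:ℝ) ≤ (cs j : ℝ) * (2 * Real.log j) ^ E := h1
      _ = (cs j : ℝ) * (2 ^ E * (Real.log j) ^ E) := by rw [mul_pow]
  -- eventual bound : (log j)^E ≤ (1/2)^E * j^(1/2)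
  have hev : ∀ᶠ j : ℕ in atTop, (Real.log j) ^ E ≤ (1/2)^E * (j:ℝ) ^ ((1:ℝ)/2) := by
    have ho := isLittleO_log_rpow_rpow_atTop (E:ℝ) (by norm_num : (0:ℝ) < 1/2)
    have hb := ho.def (by positivity : (0:ℝ) < (1/2:ℝ)^E)
    have hnat := (tendsto_natCast_atTop_atTop (R := ℝ)).eventually hb
    filter_upwards [hnat, eventually_ge_atTop 1] with j hj h1
    have hlogj0 : 0 ≤ Real.log j := Real.log_natCast_nonneg j
    have hj0 : (0:ℝ) ≤ (j:ℝ)^((1:ℝ)/2) := Real.rpow_nonneg (by positivity) _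
    rw [Real.norm_eq_abs, Real.norm_eq_abs, Real.rpow_natCast,
      abs_of_nonneg (pow_nonneg hlogj0 E), abs_of_nonneg hj0] at hj
    exact hj
  obtain ⟨J₁, hJ₁⟩ := eventually_atTop.1 hev
  refine ⟨1/2^E, 2*4^E/c, by positivity, by positivity,
    max (max J₁ 16) ((2*M+4)^2 + 3), by omega, ?_⟩
  intro j hj
  have hj16 : 16 ≤ j := by omega
  have hjM : (2*M+4)^2 ≤ j := by omega
  have hj3 : 3 ≤ j := by omega
  refine ⟨lower j hj3, ?_⟩
  set n := cs j with hn
  obtain ⟨hpos, hTD, hle⟩ := hmem j (by omega)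
  have hjpos : (0:ℝ) < (j:ℝ) := by exact_mod_cast (by omega : 0 < j)
  have hlogj : (1:ℝ) < Real.log j := lt_of_lt_of_le hlog3
    (Real.log_le_log (by norm_num) (by exact_mod_cast hj3))
  set L := Real.log j with hL
  have hLpos : (0:ℝ) < L := by linarith
  have hLE : (0:ℝ) < L ^ E := by positivity
  -- n ≥ j^(1/2)
  have hhalf : (j:ℝ)^((1:ℝ)/2) * (j:ℝ)^((1:ℝ)/2) = (j:ℝ) := by
    rw [← Real.rpow_add hjpos]; norm_num
  have hsqrt : (j:ℝ)^((1:ℝ)/2) ≤ (n:ℝ) := by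
    have hloE : L ^ E ≤ (1/2)^E * (j:ℝ)^((1:ℝ)/2) := hJ₁ j (by omega)
    have h2 : (2:ℝ)^E * L^E ≤ (j:ℝ)^((1:ℝ)/2) := by
      have := mul_le_mul_of_nonneg_left hloE (by positivity : (0:ℝ) ≤ (2:ℝ)^E)
      calc (2:ℝ)^E * L^E ≤ (2:ℝ)^E * ((1/2)^E * (j:ℝ)^((1:ℝ)/2)) := this
        _ = (j:ℝ)^((1:ℝ)/2) := by
            rw [← mul_assoc, ← mul_pow]; norm_num
    calc (j:ℝ)^((1:ℝ)/2) = (j:ℝ) / (j:ℝ)^((1:ℝ)/2) := by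
          rw [eq_div_iff (by positivity)]; exact hhalf
      _ ≤ (j:ℝ) / ((2:ℝ)^E * L^E) := by
          have hpos2 : (0:ℝ) < (2:ℝ)^E * L^E := by positivity
          exact div_le_div_of_nonneg_left (le_of_lt hjpos) hpos2 h2
      _ = 1/2^E * ((j:ℝ) / L ^ E) := by rw [div_mul_div_comm, one_mul, ← div_div]; try ring
      _ ≤ (n:ℝ) := lower j hj3
  -- n ≥ 2M+4
  have hn2M : 2*M+4 ≤ n := by
    have h1 : ((2*M+4 : ℕ):ℝ) ≤ (j:ℝ)^((1:ℝ)/2) := by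
      have h2 : (((2*M+4)^2 : ℕ):ℝ) ≤ (j:ℝ) := by exact_mod_cast hjM
      have h3 := Real.rpow_le_rpow (by positivity) h2 (by norm_num : (0:ℝ) ≤ 1/2)
      calc ((2*M+4:ℕ):ℝ) = ((((2*M+4)^2 : ℕ):ℝ))^((1:ℝ)/2) := by
            push_cast
            rw [← Real.rpow_natCast ((2*(M:ℝ)+4)) 2, ← Real.rpow_mul (by positivity)]
            norm_num
        _ ≤ (j:ℝ)^((1:ℝ)/2) := h3
    exact_mod_cast h1.trans hsqrt
  set b := n - 1 with hb
  have hbM : M ≤ b := by omega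
  have hbpos : 0 < b := by omega
  have hbn : (n:ℝ)/2 ≤ (b:ℝ) := by
    have : (b:ℝ) = (n:ℝ) - 1 := by
      rw [hb]; push_cast [Nat.cast_sub (by omega : 1 ≤ n)]; ring
    rw [this]
    have : (2:ℝ) ≤ (n:ℝ) := by exact_mod_cast (by omega : 2 ≤ n)
    linarith
  -- log b ≥ L/4
  have hq4 : (2:ℝ) ≤ (j:ℝ)^((1:ℝ)/4) := by
    have h2 : ((16:ℕ):ℝ) ≤ (j:ℝ) := by exact_mod_cast hj16
    have h3 := Real.rpow_le_rpow (by positivity) h2 (by norm_num : (0:ℝ) ≤ 1/4)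
    calc (2:ℝ) = ((16:ℕ):ℝ)^((1:ℝ)/4) := by
          push_cast
          rw [show (16:ℝ) = (2:ℝ)^(4:ℕ) by norm_num, ← Real.rpow_natCast 2 4,
            ← Real.rpow_mul (by norm_num)]
          norm_num
      _ ≤ (j:ℝ)^((1:ℝ)/4) := h3
  have hq14 : (j:ℝ)^((1:ℝ)/4) ≤ (b:ℝ) := by
    have h1 : (j:ℝ)^((1:ℝ)/4) * (j:ℝ)^((1:ℝ)/4) = (j:ℝ)^((1:ℝ)/2) := by
      rw [← Real.rpow_add hjpos]; norm_num
    have h2 : 2 * (j:ℝ)^((1:ℝ)/4) ≤ (j:ℝ)^((1:ℝ)/2) := by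
      rw [← h1]
      have := Real.rpow_nonneg (le_of_lt hjpos) ((1:ℝ)/4)
      nlinarith
    calc (j:ℝ)^((1:ℝ)/4) ≤ (j:ℝ)^((1:ℝ)/2)/2 := by linarith
      _ ≤ (n:ℝ)/2 := by linarith
      _ ≤ (b:ℝ) := hbn
  have hlogb : L / 4 ≤ Real.log b := by
    have h1 : Real.log ((j:ℝ)^((1:ℝ)/4)) ≤ Real.log b :=
      Real.log_le_log (by positivity) hq14
    rw [Real.log_rpow hjpos] at h1
    linarith
  -- T b < j and conclude
  have hTb : (T b : ℝ) < (j:ℝ) := by exact_mod_cast hmin j b hbpos (by omega)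
  have hchain : c * ((n:ℝ)/2) * (L/4)^E ≤ (j:ℝ) := by
    calc c * ((n:ℝ)/2) * (L/4)^E ≤ c * (b:ℝ) * (Real.log b)^E := by
          apply mul_le_mul
          · exact mul_le_mul_of_nonneg_left hbn (le_of_lt hc)
          · exact pow_le_pow_left₀ (by positivity) hlogb E
          · positivity
          · positivity
      _ ≤ (T b : ℝ) := hlb b hbM
      _ ≤ (j:ℝ) := le_of_lt hTb
  -- n ≤ (2*4^E/c) * (j / L^E)
  have h4 : (L/4)^E = L^E/4^E := div_pow L 4 E
  rw [h4] at hchain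
  have h5 : c * (n:ℝ) * L^E ≤ (j:ℝ) * (2*4^E) := by
    have h40 : (0:ℝ) < (4:ℝ)^E := by positivity
    have := mul_le_mul_of_nonneg_right hchain (le_of_lt h40)
    calc c * (n:ℝ) * L^E = c * ((n:ℝ)/2) * (L^E/4^E) * (2 * 4^E) := by
          field_simp
          try ring
      _ ≤ (j:ℝ) * (2*4^E) := by nlinarith [hchain, h40]
  calc (n:ℝ) = c * (n:ℝ) * L^E * (1/(c * L^E)) := by field_simp
    _ ≤ (j:ℝ) * (2*4^E) * (1/(c * L^E)) := by
        apply mul_le_mul_of_nonneg_right h5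
        positivity
    _ = 2*4^E/c * ((j:ℝ)/L^E) := by field_simp

lemma hlog3' : (1:ℝ) < Real.log 3 := by
  have h1 : Real.exp 1 < 3 := by
    have := Real.exp_one_lt_d9
    norm_num at this ⊢
    linarith
  calc (1:ℝ) = Real.log (Real.exp 1) := (Real.log_exp 1).symm
    _ < Real.log 3 := Real.log_lt_log (Real.exp_pos 1) h1

lemma cseq_pos (D j : ℕ) (hD : 2 ≤ D) (hj : 1 ≤ j) : 0 < cseq D j :=
  (cseq_mem D j (by omega) hj).1

lemma cseq_bounds (D : ℕ) (hD : 2 ≤ D) :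
    ∃ K₁ K₂ : ℝ, 0 < K₁ ∧ 0 < K₂ ∧ ∃ J : ℕ, 3 ≤ J ∧ ∀ j : ℕ, J ≤ j →
      K₁ * ((j:ℝ) / (Real.log j) ^ (D-1)) ≤ (cseq D j : ℝ) ∧
      (cseq D j : ℝ) ≤ K₂ * ((j:ℝ) / (Real.log j) ^ (D-1)) := by
  obtain ⟨E, rfl⟩ : ∃ E, D = E + 1 := ⟨D - 1, by omega⟩
  obtain ⟨c, hc, M, hM9, hlb⟩ := bx_card_ge E
  have hres := cseq_bounds_abstract E (by omega) (cseq (E+1))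
    (fun m => TD (E+1) (m:ℝ))
    (fun m hm => by simp only [TD_eq_card]; exact bx_card_le E m hm)
    c hc M hM9
    (fun m hm => by simp only [TD_eq_card]; exact hlb m hm)
    (fun j hj => cseq_mem (E+1) j (by omega) hj)
    (fun j m hm hlt => cseq_min (E+1) j m hm hlt)
  simpa using hres

lemma wgt_pos (D : ℕ) (s : ℝ) (hs : 0 < s) (j : ℕ) (hj : 1 ≤ j) : 0 < wgt D s j := by
  apply Real.rpow_pos_of_pos
  apply div_pos
  · exact_mod_cast hj
  · exact lt_of_lt_of_le one_pos (le_max_right _ _)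

lemma pointwise (D : ℕ) (hD : 2 ≤ D) (s : ℝ) (hs : 0 < s) :
    ∃ a b : ℝ, 0 < a ∧ 0 < b ∧ ∀ j : ℕ, 1 ≤ j →
      a * wgt D s j ≤ (cseq D j : ℝ) ^ (2*s) ∧ (cseq D j : ℝ) ^ (2*s) ≤ b * wgt D s j := by
  obtain ⟨K₁, K₂, hK₁, hK₂, J, hJ3, hJ⟩ := cseq_bounds D hD
  -- for j ≥ J : wgt = t ^ (2s) where t = j/(log j)^(D-1)
  have hwgt_eq : ∀ j : ℕ, 3 ≤ j → wgt D s j = ((j:ℝ) / (Real.log j) ^ (D-1)) ^ (2*s) := by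
    intro j hj
    have hlogj : (1:ℝ) ≤ Real.log j := le_of_lt (lt_of_lt_of_le hlog3'
      (Real.log_le_log (by norm_num) (by exact_mod_cast hj)))
    rw [wgt, max_eq_left (one_le_pow₀ hlogj)]
  have htpos : ∀ j : ℕ, 3 ≤ j → 0 < (j:ℝ) / (Real.log j) ^ (D-1) := by
    intro j hj
    have hlogj : (1:ℝ) ≤ Real.log j := le_of_lt (lt_of_lt_of_le hlog3'
      (Real.log_le_log (by norm_num) (by exact_mod_cast hj)))
    apply div_pos (by exact_mod_cast (by omega : 0 < j))
    positivity
  set F : ℕ → ℝ := fun j => (cseq D j : ℝ) ^ (2*s) / wgt D s j with hF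
  have hne : (Finset.Icc 1 J).Nonempty := ⟨1, by simp [Finset.mem_Icc]; omega⟩
  have hFpos : ∀ j ∈ Finset.Icc 1 J, 0 < F j := by
    intro j hj
    simp only [Finset.mem_Icc] at hj
    apply div_pos _ (wgt_pos D s hs j hj.1)
    apply Real.rpow_pos_of_pos
    exact_mod_cast cseq_pos D j hD hj.1
  refine ⟨min (K₁ ^ (2*s)) ((Finset.Icc 1 J).inf' hne F),
          max (K₂ ^ (2*s)) ((Finset.Icc 1 J).sup' hne F), ?_, ?_, ?_⟩
  · apply lt_min (Real.rpow_pos_of_pos hK₁ _)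
    exact (Finset.lt_inf'_iff hne).2 hFpos
  · exact lt_of_lt_of_le (Real.rpow_pos_of_pos hK₂ _) (le_max_left _ _)
  · intro j hj1
    have hwpos := wgt_pos D s hs j hj1
    by_cases hcase : j ≤ J
    · have hmem : j ∈ Finset.Icc 1 J := Finset.mem_Icc.2 ⟨hj1, hcase⟩
      constructor
      · calc min (K₁ ^ (2*s)) ((Finset.Icc 1 J).inf' hne F) * wgt D s j
            ≤ F j * wgt D s j := by
              apply mul_le_mul_of_nonneg_right _ (le_of_lt hwpos)
              exact le_trans (min_le_right _ _) (Finset.inf'_le F hmem)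
          _ = (cseq D j : ℝ) ^ (2*s) := div_mul_cancel₀ _ (ne_of_gt hwpos)
      · calc (cseq D j : ℝ) ^ (2*s) = F j * wgt D s j :=
              (div_mul_cancel₀ _ (ne_of_gt hwpos)).symm
          _ ≤ max (K₂ ^ (2*s)) ((Finset.Icc 1 J).sup' hne F) * wgt D s j := by
              apply mul_le_mul_of_nonneg_right _ (le_of_lt hwpos)
              exact le_trans (Finset.le_sup' F hmem) (le_max_right _ _)
    · have hjJ : J ≤ j := by omega
      have hj3 : 3 ≤ j := by omega
      obtain ⟨hlo, hhi⟩ := hJ j hjJ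
      have ht := htpos j hj3
      set t := (j:ℝ) / (Real.log j) ^ (D-1) with hT
      rw [hwgt_eq j hj3]
      constructor
      · calc min (K₁ ^ (2*s)) ((Finset.Icc 1 J).inf' hne F) * t ^ (2*s)
            ≤ K₁ ^ (2*s) * t ^ (2*s) := by
              apply mul_le_mul_of_nonneg_right (min_le_left _ _)
              exact Real.rpow_nonneg (le_of_lt ht) _
          _ = (K₁ * t) ^ (2*s) := (Real.mul_rpow (le_of_lt hK₁) (le_of_lt ht)).symm
          _ ≤ (cseq D j : ℝ) ^ (2*s) :=
              Real.rpow_le_rpow (by positivity) hlo (by positivity)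
      · calc (cseq D j : ℝ) ^ (2*s) ≤ (K₂ * t) ^ (2*s) :=
              Real.rpow_le_rpow (by positivity) hhi (by positivity)
          _ = K₂ ^ (2*s) * t ^ (2*s) := Real.mul_rpow (le_of_lt hK₂) (le_of_lt ht)
          _ ≤ max (K₂ ^ (2*s)) ((Finset.Icc 1 J).sup' hne F) * t ^ (2*s) := by
              apply mul_le_mul_of_nonneg_right (le_max_left _ _)
              exact Real.rpow_nonneg (le_of_lt ht) _

/-- Sandwiching of the unravelled tensor-product Sobolev ellipsoid weights: there are
constants `C₁, C₂ > 0` (depending only on `s` and `D`) with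
`C₁·Σ_j w_j β_j² ≤ Σ_j c_j^{2s} β_j² ≤ C₂·Σ_j w_j β_j²` (in `[0,∞]`), and the resulting
inclusions between the corresponding ellipsoids. -/
theorem stmt8 (D : ℕ) (hD : 2 ≤ D) (s : ℝ) (hs : 0 < s) :
    ∃ C₁ C₂ : ℝ, 0 < C₁ ∧ 0 < C₂ ∧
      (∀ β : ℕ → ℝ,
        ENNReal.ofReal C₁ * ∑' j : ℕ, ENNReal.ofReal (wgt D s (j + 1) * β (j + 1) ^ 2)
            ≤ ∑' j : ℕ, ENNReal.ofReal ((cseq D (j + 1) : ℝ) ^ (2 * s) * β (j + 1) ^ 2) ∧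
        ∑' j : ℕ, ENNReal.ofReal ((cseq D (j + 1) : ℝ) ^ (2 * s) * β (j + 1) ^ 2)
            ≤ ENNReal.ofReal C₂ * ∑' j : ℕ, ENNReal.ofReal (wgt D s (j + 1) * β (j + 1) ^ 2)) ∧
      (∀ Q : ℝ, 0 < Q → ∀ β : ℕ → ℝ,
        ((∑' j : ℕ, ENNReal.ofReal (wgt D s (j + 1) * β (j + 1) ^ 2)
              ≤ ENNReal.ofReal (Q ^ 2 / C₂) →
          ∑' j : ℕ, ENNReal.ofReal ((cseq D (j + 1) : ℝ) ^ (2 * s) * β (j + 1) ^ 2)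
              ≤ ENNReal.ofReal (Q ^ 2)) ∧
         (∑' j : ℕ, ENNReal.ofReal ((cseq D (j + 1) : ℝ) ^ (2 * s) * β (j + 1) ^ 2)
              ≤ ENNReal.ofReal (Q ^ 2) →
          ∑' j : ℕ, ENNReal.ofReal (wgt D s (j + 1) * β (j + 1) ^ 2)
              ≤ ENNReal.ofReal (Q ^ 2 / C₁)))) := by
  obtain ⟨a, b, ha, hb, hab⟩ := pointwise D hD s hs
  have hsand : ∀ β : ℕ → ℝ,
      (ENNReal.ofReal a * ∑' j : ℕ, ENNReal.ofReal (wgt D s (j + 1) * β (j + 1) ^ 2)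
          ≤ ∑' j : ℕ, ENNReal.ofReal ((cseq D (j + 1) : ℝ) ^ (2 * s) * β (j + 1) ^ 2)) ∧
      (∑' j : ℕ, ENNReal.ofReal ((cseq D (j + 1) : ℝ) ^ (2 * s) * β (j + 1) ^ 2)
          ≤ ENNReal.ofReal b * ∑' j : ℕ, ENNReal.ofReal (wgt D s (j + 1) * β (j + 1) ^ 2)) := by
    intro β
    have key1 : ∀ j : ℕ,
        ENNReal.ofReal a * ENNReal.ofReal (wgt D s (j + 1) * β (j + 1) ^ 2)
          ≤ ENNReal.ofReal ((cseq D (j + 1) : ℝ) ^ (2 * s) * β (j + 1) ^ 2) := by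
      intro j
      rw [← ENNReal.ofReal_mul (le_of_lt ha)]
      apply ENNReal.ofReal_le_ofReal
      have h1 := (hab (j+1) (by omega)).1
      have h2 : (0:ℝ) ≤ β (j+1) ^ 2 := sq_nonneg _
      calc a * (wgt D s (j + 1) * β (j + 1) ^ 2)
          = (a * wgt D s (j + 1)) * β (j + 1) ^ 2 := by ring
        _ ≤ (cseq D (j + 1) : ℝ) ^ (2 * s) * β (j + 1) ^ 2 :=
            mul_le_mul_of_nonneg_right h1 h2
    have key2 : ∀ j : ℕ,
        ENNReal.ofReal ((cseq D (j + 1) : ℝ) ^ (2 * s) * β (j + 1) ^ 2)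
          ≤ ENNReal.ofReal b * ENNReal.ofReal (wgt D s (j + 1) * β (j + 1) ^ 2) := by
      intro j
      rw [← ENNReal.ofReal_mul (le_of_lt hb)]
      apply ENNReal.ofReal_le_ofReal
      have h1 := (hab (j+1) (by omega)).2
      have h2 : (0:ℝ) ≤ β (j+1) ^ 2 := sq_nonneg _
      calc (cseq D (j + 1) : ℝ) ^ (2 * s) * β (j + 1) ^ 2
          ≤ (b * wgt D s (j + 1)) * β (j + 1) ^ 2 :=
            mul_le_mul_of_nonneg_right h1 h2
        _ = b * (wgt D s (j + 1) * β (j + 1) ^ 2) := by ring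
    constructor
    · rw [← ENNReal.tsum_mul_left]
      exact ENNReal.tsum_le_tsum key1
    · rw [← ENNReal.tsum_mul_left]
      exact ENNReal.tsum_le_tsum key2
  refine ⟨a, b, ha, hb, hsand, ?_⟩
  intro Q hQ β
  obtain ⟨hA, hB⟩ := hsand β
  constructor
  · intro hw
    calc ∑' j : ℕ, ENNReal.ofReal ((cseq D (j + 1) : ℝ) ^ (2 * s) * β (j + 1) ^ 2)
        ≤ ENNReal.ofReal b * ∑' j : ℕ, ENNReal.ofReal (wgt D s (j + 1) * β (j + 1) ^ 2) := hB
      _ ≤ ENNReal.ofReal b * ENNReal.ofReal (Q ^ 2 / b) := mul_le_mul_right hw _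
      _ = ENNReal.ofReal (b * (Q ^ 2 / b)) := (ENNReal.ofReal_mul (le_of_lt hb)).symm
      _ = ENNReal.ofReal (Q ^ 2) := by
          rw [mul_comm, div_mul_cancel₀ _ (ne_of_gt hb)]
  · intro hc
    have h1 : ENNReal.ofReal a *
        ∑' j : ℕ, ENNReal.ofReal (wgt D s (j + 1) * β (j + 1) ^ 2)
        ≤ ENNReal.ofReal (Q ^ 2) := le_trans hA hc
    rw [ENNReal.ofReal_div_of_pos ha,
      ENNReal.le_div_iff_mul_le (Or.inl (ENNReal.ofReal_pos.2 ha).ne')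
        (Or.inl ENNReal.ofReal_ne_top), mul_comm]
    exact h1
end
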